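/- arXiv:2504.20704 — 9 statements merged into one kernel-verified Lean document; each statement's English description precedes it below -/
import Mathlib

section
/- Fix constants 0 < α ≤ β and an (α,β)-PDF-bounded, non-atomic probability distribution D supported on [0,1]. There exists a constant c > 0 (depending only on D) such that the following holds: for n agents and m = m(n) chores with m(n) ≥ c·n·log n, with disutilities drawn independently from D, the allocation that assigns each chore j to the agent argmin_{i} d_i(j) with the smallest disutility for j is envy-free with probability tending to 1 as n → ∞. -/
open MeasureTheory Filter

/-- Cost (disutility) of agent `i` for the bundle of agent `i'` under allocation `A`. -/
noncomputable def bundleCost {n m : ℕ} (d : Fin n → Fin m → ℝ) (A : Fin m → Fin n)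
    (i i' : Fin n) : ℝ :=
  ∑ j ∈ Finset.univ.filter (fun j => A j = i'), d i j

/-- An allocation is envy-free if every agent weakly prefers her own bundle
to the bundle of any other agent. -/
noncomputable def IsEnvyFree {n m : ℕ} (d : Fin n → Fin m → ℝ) (A : Fin m → Fin n) : Prop :=
  ∀ i i' : Fin n, bundleCost d A i i ≤ bundleCost d A i i'

/-- An allocation is cost-minimizing if each chore is assigned to an agent with the
smallest disutility for it. -/
def IsCostMinimizing {n m : ℕ} (d : Fin n → Fin m → ℝ) (A : Fin m → Fin n) : Prop :=
  ∀ j : Fin m, ∀ i : Fin n, d (A j) j ≤ d i j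

/-- `D` is a non-atomic distribution on `[0,1]` with a probability density function
bounded between `α` and `β` on `[0,1]` (and vanishing outside `[0,1]`). -/
def PDFBounded01 (D : Measure ℝ) (α β : ℝ) : Prop :=
  (∀ x : ℝ, D {x} = 0) ∧
  ∃ f : ℝ → ℝ,
    (∀ x ∈ Set.Icc (0 : ℝ) 1, α ≤ f x ∧ f x ≤ β) ∧
    (∀ x, x ∉ Set.Icc (0 : ℝ) 1 → f x = 0) ∧
    D = MeasureTheory.volume.withDensity (fun x => ENNReal.ofReal (f x))

/-!
Under a cost-minimizing allocation agent `i` pays only for chores on which she is the cheapest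
agent, so `d_i(A_i) ≤ ∑_j Z_ij` with `Z_ij = d_ij · [d_ij = min_k d_kj]`. Splitting at the level
`s = 3 log n / (α n)`, a column contributes at most `s` when `d_ij < s` (probability `≤ β s`) and
at most `1` when the whole column is `≥ s` (probability `≤ e^{-α s n} = n⁻³`), so
`E Z_ij = O(log² n / n²)`. On the other hand, `i` pays at least `1/2` for every chore whose column
has `d_i'j < 1/(2βn)`, `d_ij ≥ 1/2` and all other entries `≥ 1/(2βn)`: such a chore goes to `i'`,
and a column has this shape with probability at least `p = α²/(8βn)`. The columns are i.i.d., so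
Chernoff bounds make `∑_j Z_ij ≥ mp/8` and `#{such chores} ≤ mp/4` both have probability at most
`exp(-mp/16) ≤ n⁻³` once `m ≥ c n log n`, and a union bound over the `n²` pairs `(i, i')` leaves
a failure probability of at most `1/n`.
-/

open scoped ENNReal
open Set Real

namespace PDFBounded01

variable {D : Measure ℝ} {α β : ℝ}

theorem measure_le_ofReal_mul (hD : PDFBounded01 D α β) {S : Set ℝ} (hS : MeasurableSet S) :
    D S ≤ ENNReal.ofReal β * volume (S ∩ Icc 0 1) := by
  obtain ⟨-, f, hfab, hf0, rfl⟩ := hD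
  rw [withDensity_apply _ hS, ← setLIntegral_const, ← lintegral_indicator hS,
    ← lintegral_indicator (hS.inter measurableSet_Icc)]
  refine lintegral_mono fun x => ?_
  by_cases hx : x ∈ Icc (0 : ℝ) 1
  · by_cases hxS : x ∈ S <;> simp [indicator, hx, hxS, ENNReal.ofReal_le_ofReal (hfab x hx).2]
  · simp [indicator, hx, hf0 x hx]

theorem ofReal_mul_le_measure (hD : PDFBounded01 D α β) {S : Set ℝ} (hS : MeasurableSet S)
    (hS01 : S ⊆ Icc 0 1) : ENNReal.ofReal α * volume S ≤ D S := by
  obtain ⟨-, f, hfab, -, rfl⟩ := hD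
  rw [withDensity_apply _ hS, ← setLIntegral_const]
  exact setLIntegral_mono' hS fun x hx => ENNReal.ofReal_le_ofReal (hfab x (hS01 hx)).1

theorem measure_compl_Icc (hD : PDFBounded01 D α β) : D (Icc 0 1)ᶜ = 0 := by
  simpa using hD.measure_le_ofReal_mul (measurableSet_Icc (a := (0 : ℝ)) (b := 1)).compl

theorem ae_mem_Icc (hD : PDFBounded01 D α β) : ∀ᵐ x ∂D, x ∈ Icc (0 : ℝ) 1 :=
  measure_eq_zero_iff_ae_notMem.mp hD.measure_compl_Icc |>.mono fun _ hx => not_not.mp hx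

theorem ae_mem_Icc_pi (hD : PDFBounded01 D α β) {ι κ : Type*} [Fintype ι] [Fintype κ]
    [IsProbabilityMeasure D] :
    ∀ᵐ d ∂(Measure.pi fun _ : ι => Measure.pi fun _ : κ => D), ∀ i j, d i j ∈ Icc (0 : ℝ) 1 :=
  ae_all_iff.mpr fun i => ae_all_iff.mpr fun j =>
    (Measure.tendsto_eval_ae_ae (μ := fun _ : ι => Measure.pi fun _ : κ => D) (i := i)).eventually
      ((Measure.tendsto_eval_ae_ae (μ := fun _ : κ => D) (i := j)).eventually hD.ae_mem_Icc)

theorem one_le [IsProbabilityMeasure D] (hD : PDFBounded01 D α β) : 1 ≤ β := by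
  have h := hD.measure_le_ofReal_mul MeasurableSet.univ
  rw [measure_univ, univ_inter, Real.volume_Icc, sub_zero, ENNReal.ofReal_one, mul_one] at h
  exact ENNReal.one_le_ofReal.mp h

theorem measure_Iio_le (hD : PDFBounded01 D α β) (hβ : 0 ≤ β) (t : ℝ) :
    D (Iio t) ≤ ENNReal.ofReal (β * t) := by
  calc D (Iio t) ≤ ENNReal.ofReal β * volume (Iio t ∩ Icc 0 1) :=
        hD.measure_le_ofReal_mul measurableSet_Iio
    _ ≤ ENNReal.ofReal β * volume (Ico 0 t) := by
        gcongr
        exact fun x hx => ⟨hx.2.1, hx.1⟩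
    _ = ENNReal.ofReal (β * t) := by rw [Real.volume_Ico, sub_zero, ENNReal.ofReal_mul hβ]

theorem ofReal_mul_sub_le_measure_Icc (hD : PDFBounded01 D α β) (hα : 0 ≤ α) {a b : ℝ}
    (ha : 0 ≤ a) (hb : b ≤ 1) : ENNReal.ofReal (α * (b - a)) ≤ D (Icc a b) := by
  rw [ENNReal.ofReal_mul hα, ← Real.volume_Icc]
  exact hD.ofReal_mul_le_measure measurableSet_Icc (Icc_subset_Icc ha hb)

theorem ofReal_mul_le_measure_Iio (hD : PDFBounded01 D α β) (hα : 0 ≤ α) {t : ℝ}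
    (ht1 : t ≤ 1) : ENNReal.ofReal (α * t) ≤ D (Iio t) := by
  calc ENNReal.ofReal (α * t) = ENNReal.ofReal α * volume (Ico 0 t) := by
        rw [Real.volume_Ico, sub_zero, ENNReal.ofReal_mul hα]
    _ ≤ D (Ico 0 t) := hD.ofReal_mul_le_measure measurableSet_Ico
        fun x hx => ⟨hx.1, hx.2.le.trans ht1⟩
    _ ≤ D (Iio t) := measure_mono Ico_subset_Iio_self

variable [IsProbabilityMeasure D]

theorem ofReal_one_sub_le_measure_Ici (hD : PDFBounded01 D α β) (hβ : 0 ≤ β) {t : ℝ}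
    (ht : 0 ≤ t) : ENNReal.ofReal (1 - β * t) ≤ D (Ici t) := by
  rw [← compl_Iio, prob_compl_eq_one_sub measurableSet_Iio, ENNReal.ofReal_sub _ (by positivity),
    ENNReal.ofReal_one]
  exact tsub_le_tsub_left (hD.measure_Iio_le hβ t) 1

theorem measure_Ici_le_exp (hD : PDFBounded01 D α β) (hα : 0 ≤ α) {t : ℝ} (ht : 0 ≤ t) :
    D (Ici t) ≤ ENNReal.ofReal (exp (-(α * t))) := by
  rcases le_or_gt t 1 with ht1 | ht1
  · calc D (Ici t) = 1 - D (Iio t) := by rw [← compl_Iio, prob_compl_eq_one_sub measurableSet_Iio]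
      _ ≤ 1 - ENNReal.ofReal (α * t) :=
          tsub_le_tsub_left (hD.ofReal_mul_le_measure_Iio hα ht1) 1
      _ = ENNReal.ofReal (1 - α * t) := by
          rw [ENNReal.ofReal_sub _ (by positivity), ENNReal.ofReal_one]
      _ ≤ ENNReal.ofReal (exp (-(α * t))) := by
          gcongr
          linarith [add_one_le_exp (-(α * t))]
  · refine le_of_eq_of_le (measure_mono_null (fun x hx => ?_) hD.measure_compl_Icc) zero_le
    exact fun h => absurd (h.2.trans_lt ht1) (not_lt.mpr hx)

end PDFBounded01

section Probability

open ProbabilityTheory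

variable {E : Type*} [MeasurableSpace E] {μ : Measure E} [IsProbabilityMeasure μ]

theorem one_sub_measure_le_of_compl_ae_le {s t : Set E} (h : sᶜ ≤ᵐ[μ] t) : 1 - μ t ≤ μ s := by
  refine tsub_le_iff_right.mpr ?_
  calc 1 = μ (s ∪ sᶜ) := by rw [union_compl_self, measure_univ]
    _ ≤ μ s + μ sᶜ := measure_union_le _ _
    _ ≤ μ s + μ t := add_le_add le_rfl (measure_mono_ae h)

theorem measurePreserving_transpose {ι κ : Type*} [Fintype ι] [Fintype κ] :
    MeasurePreserving (fun (x : ι → κ → E) j i => x i j)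
      (Measure.pi fun _ : ι => Measure.pi fun _ : κ => μ)
      (Measure.pi fun _ : κ => Measure.pi fun _ : ι => μ) := by
  refine ⟨by fun_prop, ?_⟩
  simp only [← Measure.infinitePi_eq_pi]
  rw [← Measure.infinitePi_map_curry (fun (_ : ι) (_ : κ) => μ),
    ← Measure.infinitePi_map_curry (fun (_ : κ) (_ : ι) => μ),
    ← Measure.infinitePi_map_piCongrLeft (fun _ : ι × κ => μ) (Equiv.prodComm κ ι),
    Measure.map_map (by fun_prop) (by fun_prop), Measure.map_map (by fun_prop) (by fun_prop)]
  rfl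

theorem measure_le_sum_le_exp {κ : Type*} [Fintype κ] {g : E → ℝ} (hg : Measurable g) {C : ℝ}
    (hC : ∫⁻ y, ENNReal.ofReal (exp (g y)) ∂μ ≤ ENNReal.ofReal (exp C)) (T : ℝ) :
    Measure.pi (fun _ : κ => μ) {x | T ≤ ∑ j, g (x j)} ≤
      ENNReal.ofReal (exp (Fintype.card κ * C - T)) := by
  set F : (κ → E) → ℝ≥0∞ := fun x => ∏ j, ENNReal.ofReal (exp (g (x j)))
  have hF : ∫⁻ x, F x ∂Measure.pi (fun _ => μ) ≤ ENNReal.ofReal (exp C) ^ Fintype.card κ := by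
    have hind := iIndepFun_pi (μ := fun _ : κ => μ)
      (X := fun _ y => ENNReal.ofReal (exp (g y))) fun _ => by fun_prop
    rw [lintegral_prod_eq_prod_lintegral_of_indepFun _ _ hind fun j => by fun_prop]
    simp_rw [fun j => (measurePreserving_eval (fun _ : κ => μ) j).lintegral_comp
      (f := fun y => ENNReal.ofReal (exp (g y))) (by fun_prop)]
    simpa using pow_le_pow_left₀ zero_le hC _
  have hsub : {x | T ≤ ∑ j, g (x j)} ⊆ {x | ENNReal.ofReal (exp T) ≤ F x} := fun x hx => by
    simp only [mem_ofPred_eq, F, ← ENNReal.ofReal_prod_of_nonneg fun j _ => (exp_pos _).le,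
      ← exp_sum]
    exact ENNReal.ofReal_le_ofReal (exp_le_exp.mpr hx)
  calc Measure.pi (fun _ : κ => μ) {x | T ≤ ∑ j, g (x j)}
      ≤ (∫⁻ x, F x ∂Measure.pi (fun _ => μ)) / ENNReal.ofReal (exp T) :=
        (measure_mono hsub).trans
          (meas_ge_le_lintegral_div (by fun_prop) (by simp [exp_pos]) ENNReal.ofReal_ne_top)
    _ ≤ ENNReal.ofReal (exp C) ^ Fintype.card κ / ENNReal.ofReal (exp T) := by gcongr
    _ = ENNReal.ofReal (exp (Fintype.card κ * C - T)) := by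
        rw [← ENNReal.ofReal_pow (exp_pos _).le, ← ENNReal.ofReal_div_of_pos (exp_pos _),
          ← exp_nat_mul, ← exp_sub]

theorem measure_le_sum_col_le_exp {ι κ : Type*} [Fintype ι] [Fintype κ] {g : (ι → E) → ℝ}
    (hg : Measurable g) {C : ℝ}
    (hC : ∫⁻ y, ENNReal.ofReal (exp (g y)) ∂Measure.pi (fun _ : ι => μ) ≤
      ENNReal.ofReal (exp C)) (T : ℝ) :
    (Measure.pi fun _ : ι => Measure.pi fun _ : κ => μ) {x | T ≤ ∑ j, g (fun i => x i j)} ≤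
      ENNReal.ofReal (exp (Fintype.card κ * C - T)) := by
  rw [← measurePreserving_transpose.measure_preimage
    (measurableSet_le measurable_const (by fun_prop)).nullMeasurableSet]
  exact measure_le_sum_le_exp hg hC T

theorem exp_le_one_add_two_mul {z : ℝ} (hz0 : 0 ≤ z) (hz1 : z ≤ 1) : exp z ≤ 1 + 2 * z := by
  have := exp_bound' hz0 hz1 (n := 1) one_pos
  norm_num [Nat.factorial] at this
  linarith

theorem lintegral_exp_le_exp_two_mul {Z : E → ℝ} (hZ : Measurable Z)
    (hZ01 : ∀ x, Z x ∈ Icc (0 : ℝ) 1) {a : ℝ} (ha : 0 ≤ a)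
    (hZa : ∫⁻ x, ENNReal.ofReal (Z x) ∂μ ≤ ENNReal.ofReal a) :
    ∫⁻ x, ENNReal.ofReal (exp (Z x)) ∂μ ≤ ENNReal.ofReal (exp (2 * a)) := by
  have hpt : ∀ x, ENNReal.ofReal (exp (Z x)) ≤ 1 + 2 * ENNReal.ofReal (Z x) := fun x => by
    calc ENNReal.ofReal (exp (Z x)) ≤ ENNReal.ofReal (1 + 2 * Z x) :=
          ENNReal.ofReal_le_ofReal (exp_le_one_add_two_mul (hZ01 x).1 (hZ01 x).2)
      _ = 1 + 2 * ENNReal.ofReal (Z x) := by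
          rw [ENNReal.ofReal_add zero_le_one (by linarith [(hZ01 x).1]), ENNReal.ofReal_one,
            ENNReal.ofReal_mul zero_le_two, ENNReal.ofReal_ofNat]
  calc ∫⁻ x, ENNReal.ofReal (exp (Z x)) ∂μ ≤ ∫⁻ x, 1 + 2 * ENNReal.ofReal (Z x) ∂μ :=
        lintegral_mono hpt
    _ = 1 + 2 * ∫⁻ x, ENNReal.ofReal (Z x) ∂μ := by
        rw [lintegral_add_left measurable_const, lintegral_const_mul _ (by fun_prop),
          lintegral_const, measure_univ, one_mul]
    _ ≤ 1 + 2 * ENNReal.ofReal a := by gcongr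
    _ = ENNReal.ofReal (1 + 2 * a) := by
        rw [ENNReal.ofReal_add zero_le_one (by positivity), ENNReal.ofReal_one,
          ENNReal.ofReal_mul zero_le_two, ENNReal.ofReal_ofNat]
    _ ≤ ENNReal.ofReal (exp (2 * a)) := by
        gcongr
        linarith [add_one_le_exp (2 * a)]

theorem lintegral_exp_neg_indicator_le {B : Set E} (hB : MeasurableSet B) {p : ℝ}
    (hp : ENNReal.ofReal p ≤ μ B) :
    ∫⁻ x, ENNReal.ofReal (exp (-B.indicator 1 x)) ∂μ ≤ ENNReal.ofReal (exp (-(p / 2))) := by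
  have hpt : ∀ x, ENNReal.ofReal (exp (-B.indicator 1 x)) =
      B.indicator (fun _ => ENNReal.ofReal (exp (-1))) x + Bᶜ.indicator (fun _ => 1) x :=
    fun x => by by_cases hx : x ∈ B <;> simp [hx]
  have hq := ofReal_measureReal (μ := μ) (s := B)
  have hq1 : μ.real B ≤ 1 := measureReal_le_one
  have hpq : p ≤ μ.real B := by
    rwa [← hq, ENNReal.ofReal_le_ofReal_iff measureReal_nonneg] at hp
  have he : exp (-1) ≤ 1 / 2 := by
    rw [exp_neg, ← one_div]
    exact one_div_le_one_div_of_le two_pos (by linarith [add_one_le_exp 1])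
  rw [lintegral_congr hpt, lintegral_add_left (measurable_const.indicator hB),
    lintegral_indicator_const hB, lintegral_indicator_const hB.compl,
    prob_compl_eq_one_sub hB, ← hq, ← ENNReal.ofReal_mul (exp_pos _).le, one_mul,
    ← ENNReal.ofReal_one, ← ENNReal.ofReal_sub _ measureReal_nonneg,
    ← ENNReal.ofReal_add (by positivity) (by linarith)]
  gcongr
  nlinarith [add_one_le_exp (-(p / 2)), measureReal_nonneg (μ := μ) (s := B)]

end Probability

section Columns

variable {n m : ℕ}

-- Truncated to `[0, 1]` so that `exp_le_one_add_two_mul` bounds its exponential moment.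
noncomputable def ownCost (i : Fin n) (x : Fin n → ℝ) : ℝ :=
  if ∀ k, x i ≤ x k then max 0 (min (x i) 1) else 0

def crossBox (i i' : Fin n) (s : ℝ) : Set (Fin n → ℝ) :=
  univ.pi fun k => if k = i' then Iio s else if k = i then Icc (1 / 2) 1 else Ici s

theorem ownCost_mem_Icc (i : Fin n) (x : Fin n → ℝ) : ownCost i x ∈ Icc (0 : ℝ) 1 := by
  unfold ownCost
  split_ifs <;> simp

theorem measurable_ownCost (i : Fin n) : Measurable (ownCost i) := by
  refine Measurable.ite ?_ (by fun_prop) measurable_const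
  simp only [ofPred_forall]
  exact .iInter fun k => measurableSet_le (measurable_pi_apply i) (measurable_pi_apply k)

theorem measurableSet_crossBox (i i' : Fin n) (s : ℝ) : MeasurableSet (crossBox i i' s) :=
  .univ_pi fun k => by split_ifs <;> measurability

theorem bundleCost_self_le_sum_ownCost {d : Fin n → Fin m → ℝ}
    (hd : ∀ i j, d i j ∈ Icc (0 : ℝ) 1) {A : Fin m → Fin n} (hA : IsCostMinimizing d A)
    (i : Fin n) : bundleCost d A i i ≤ ∑ j, ownCost i (fun k => d k j) := by
  have hown : ∀ j, A j = i → d i j = ownCost i (fun k => d k j) := fun j hj => by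
    rw [ownCost, if_pos (hj ▸ hA j), min_eq_left (hd i j).2, max_eq_right (hd i j).1]
  calc bundleCost d A i i
      = ∑ j ∈ Finset.univ.filter (fun j => A j = i), ownCost i (fun k => d k j) :=
        Finset.sum_congr rfl fun j hj => hown j (Finset.mem_filter.mp hj).2
    _ ≤ ∑ j, ownCost i (fun k => d k j) :=
        Finset.sum_le_sum_of_subset_of_nonneg (Finset.filter_subset _ _)
          fun j _ _ => (ownCost_mem_Icc i _).1

theorem eq_of_mem_crossBox {d : Fin n → Fin m → ℝ} {A : Fin m → Fin n}
    (hA : IsCostMinimizing d A) {i i' : Fin n} {s : ℝ} (hs : s ≤ 1 / 2) {j : Fin m}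
    (hj : (fun k => d k j) ∈ crossBox i i' s) : A j = i' := by
  by_contra hAj
  have hlt : d i' j < s := by simpa using hj i' (mem_univ _)
  have hge : s ≤ d (A j) j := by
    have := hj (A j) (mem_univ _)
    dsimp only at this
    rw [if_neg hAj] at this
    split_ifs at this
    · exact hs.trans this.1
    · exact this
  exact absurd (hA j i') (not_le.mpr (hlt.trans_le hge))

theorem half_mul_sum_indicator_crossBox_le_bundleCost {d : Fin n → Fin m → ℝ}
    (hd : ∀ i j, 0 ≤ d i j) {A : Fin m → Fin n} (hA : IsCostMinimizing d A) {i i' : Fin n}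
    (hii' : i ≠ i') {s : ℝ} (hs : s ≤ 1 / 2) :
    1 / 2 * ∑ j, (crossBox i i' s).indicator 1 (fun k => d k j) ≤ bundleCost d A i i' := by
  rw [bundleCost, Finset.sum_filter, Finset.mul_sum]
  refine Finset.sum_le_sum fun j _ => ?_
  by_cases hj : (fun k => d k j) ∈ crossBox i i' s
  · have hdi : 1 / 2 ≤ d i j := by
      have := hj i (mem_univ _)
      dsimp only at this
      rw [if_neg hii', if_pos rfl] at this
      exact this.1
    simpa [indicator_of_mem hj, eq_of_mem_crossBox hA hs hj] using hdi
  · simp only [indicator_of_notMem hj, mul_zero]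
    split_ifs <;> simp [hd]

def pairBadEvent (s T : ℝ) (i i' : Fin n) : Set (Fin n → Fin m → ℝ) :=
  if i = i' then {d | T ≤ ∑ j, ownCost i (fun k => d k j)}
  else {d | ∑ j, (crossBox i i' s).indicator 1 (fun k => d k j) ≤ 2 * T}

theorem isEnvyFree_of_forall_notMem_pairBadEvent {d : Fin n → Fin m → ℝ}
    (hd : ∀ i j, d i j ∈ Icc (0 : ℝ) 1) {A : Fin m → Fin n} (hA : IsCostMinimizing d A)
    {s T : ℝ} (hs : s ≤ 1 / 2) (hgood : ∀ i i', d ∉ pairBadEvent s T i i') :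
    IsEnvyFree d A := by
  intro i i'
  rcases eq_or_ne i i' with rfl | hii'
  · exact le_rfl
  have hown := hgood i i
  have hcross := hgood i i'
  rw [pairBadEvent, if_pos rfl, mem_ofPred_eq, not_le] at hown
  rw [pairBadEvent, if_neg hii', mem_ofPred_eq, not_le] at hcross
  calc bundleCost d A i i ≤ T := (bundleCost_self_le_sum_ownCost hd hA i).trans hown.le
    _ ≤ 1 / 2 * ∑ j, (crossBox i i' s).indicator 1 (fun k => d k j) := by linarith
    _ ≤ bundleCost d A i i' :=
        half_mul_sum_indicator_crossBox_le_bundleCost (fun i j => (hd i j).1) hA hii' hs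

end Columns

section ColumnBounds

variable {D : Measure ℝ} [IsProbabilityMeasure D] {α β : ℝ} {n : ℕ}

theorem lintegral_ownCost_le (hD : PDFBounded01 D α β) (hα : 0 ≤ α) (hβ : 0 ≤ β) (i : Fin n)
    {s : ℝ} (hs : 0 ≤ s) :
    ∫⁻ x, ENNReal.ofReal (ownCost i x) ∂Measure.pi (fun _ : Fin n => D) ≤
      ENNReal.ofReal (β * s ^ 2 + exp (-(α * s * n))) := by
  set low : Set (Fin n → ℝ) := Function.eval i ⁻¹' Iio s
  set high : Set (Fin n → ℝ) := univ.pi fun _ => Ici s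
  have hlow : MeasurableSet low := measurableSet_Iio.preimage (measurable_pi_apply i)
  have hpt : ∀ x, ENNReal.ofReal (ownCost i x) ≤
      low.indicator (fun _ => ENNReal.ofReal s) x + high.indicator 1 x := by
    intro x
    by_cases hmin : ∀ k, x i ≤ x k
    · rw [ownCost, if_pos hmin]
      rcases lt_or_ge (x i) s with hlt | hge
      · rw [indicator_of_mem (s := low) hlt]
        exact le_add_right
          (ENNReal.ofReal_le_ofReal (max_le hs ((min_le_left _ _).trans hlt.le)))
      · rw [indicator_of_mem (s := high) fun k _ => hge.trans (hmin k), Pi.one_apply]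
        exact le_add_left (ENNReal.ofReal_le_one.mpr (max_le zero_le_one (min_le_right _ _)))
    · simp [ownCost, hmin]
  calc ∫⁻ x, ENNReal.ofReal (ownCost i x) ∂Measure.pi (fun _ : Fin n => D)
      ≤ ∫⁻ x, low.indicator (fun _ => ENNReal.ofReal s) x + high.indicator 1 x
          ∂Measure.pi (fun _ : Fin n => D) := lintegral_mono hpt
    _ = ENNReal.ofReal s * D (Iio s) + D (Ici s) ^ n := by
        rw [lintegral_add_left (measurable_const.indicator hlow), lintegral_indicator_const hlow,
          lintegral_indicator_one (.univ_pi fun _ => measurableSet_Ici),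
          (measurePreserving_eval _ i).measure_preimage measurableSet_Iio.nullMeasurableSet,
          Measure.pi_pi, Finset.prod_const, Finset.card_univ, Fintype.card_fin]
    _ ≤ ENNReal.ofReal s * ENNReal.ofReal (β * s) + ENNReal.ofReal (exp (-(α * s))) ^ n := by
        gcongr
        exacts [hD.measure_Iio_le hβ s, hD.measure_Ici_le_exp hα hs]
    _ = ENNReal.ofReal (β * s ^ 2 + exp (-(α * s * n))) := by
        rw [← ENNReal.ofReal_mul hs, ← ENNReal.ofReal_pow (exp_pos _).le, ← exp_nat_mul,
          ← ENNReal.ofReal_add (by positivity) (exp_pos _).le]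
        ring_nf

theorem one_div_two_mul_mul_le_half {β : ℝ} (hβ : 1 ≤ β) (n : ℕ) : 1 / (2 * β * n) ≤ 1 / 2 := by
  rcases Nat.eq_zero_or_pos n with rfl | hn
  · simp
  · gcongr
    nlinarith [(Nat.one_le_cast (α := ℝ)).mpr hn]

theorem ofReal_le_measure_crossBox (hD : PDFBounded01 D α β) (hα : 0 ≤ α) {i i' : Fin n}
    (hii' : i ≠ i') :
    ENNReal.ofReal (α ^ 2 / (8 * β * n)) ≤
      Measure.pi (fun _ : Fin n => D) (crossBox i i' (1 / (2 * β * n))) := by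
  set s := 1 / (2 * β * n)
  have hβ : 1 ≤ β := hD.one_le
  have hn : (1 : ℝ) ≤ n := by exact_mod_cast i.pos
  have hs0 : 0 ≤ s := by positivity
  have hβs : β * s = 1 / (2 * n) := by simp only [s]; field_simp
  have hs : s ≤ 1 / 2 := one_div_two_mul_mul_le_half hβ n
  set rest := (Finset.univ.erase i').erase i
  have hrest : ENNReal.ofReal (1 / 2) ≤ D (Ici s) ^ rest.card := by
    have hbase : 1 - β * s ∈ Icc (0 : ℝ) 1 := by
      have : 1 / (2 * (n : ℝ)) ≤ 1 / 2 := by gcongr; linarith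
      rw [hβs]
      constructor <;> [linarith; linarith [show 0 ≤ 1 / (2 * (n : ℝ)) by positivity]]
    have hbern : 1 / 2 ≤ (1 - β * s) ^ n := by
      have := one_add_mul_le_pow (a := -(β * s)) (by linarith [hbase.1]) n
      have hn2 : (n : ℝ) * -(β * s) = -(1 / 2) := by rw [hβs]; field_simp
      rw [← sub_eq_add_neg, hn2] at this
      linarith
    calc ENNReal.ofReal (1 / 2) ≤ ENNReal.ofReal ((1 - β * s) ^ rest.card) := by
          refine ENNReal.ofReal_le_ofReal
            (hbern.trans (pow_le_pow_of_le_one hbase.1 hbase.2 ?_))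
          simpa using Finset.card_le_univ rest
      _ ≤ D (Ici s) ^ rest.card := by
          rw [ENNReal.ofReal_pow hbase.1]
          gcongr
          exact hD.ofReal_one_sub_le_measure_Ici (by linarith) hs0
  have hprod : Measure.pi (fun _ : Fin n => D) (crossBox i i' s) =
      D (Iio s) * (D (Icc (1 / 2) 1) * D (Ici s) ^ rest.card) := by
    rw [crossBox, Measure.pi_pi, ← Finset.mul_prod_erase _ _ (Finset.mem_univ i'),
      ← Finset.mul_prod_erase _ _ (Finset.mem_erase.mpr ⟨hii', Finset.mem_univ i⟩),
      ← Finset.prod_const]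
    simp only [if_neg hii']
    congr 2
    refine Finset.prod_congr rfl fun k hk => ?_
    rw [if_neg (Finset.ne_of_mem_erase (Finset.mem_of_mem_erase hk)),
      if_neg (Finset.ne_of_mem_erase hk)]
  calc ENNReal.ofReal (α ^ 2 / (8 * β * n))
      = ENNReal.ofReal (α * s) *
          (ENNReal.ofReal (α * (1 - 1 / 2)) * ENNReal.ofReal (1 / 2)) := by
        rw [← ENNReal.ofReal_mul (by positivity), ← ENNReal.ofReal_mul (by positivity)]
        congr 1
        simp only [s]
        field_simp
        ring
    _ ≤ D (Iio s) * (D (Icc (1 / 2) 1) * D (Ici s) ^ rest.card) := by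
        gcongr
        exacts [hD.ofReal_mul_le_measure_Iio hα (hs.trans (by norm_num)),
          hD.ofReal_mul_sub_le_measure_Icc hα (by norm_num) le_rfl]
    _ = _ := hprod.symm

end ColumnBounds

section Tails

variable {D : Measure ℝ} [IsProbabilityMeasure D] {α β : ℝ} {n m : ℕ}

theorem measure_le_sum_ownCost_le (i : Fin n) {a : ℝ} (ha : 0 ≤ a)
    (hZ : ∫⁻ x, ENNReal.ofReal (ownCost i x) ∂Measure.pi (fun _ : Fin n => D) ≤
      ENNReal.ofReal a) (T : ℝ) :
    (Measure.pi fun _ : Fin n => Measure.pi fun _ : Fin m => D)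
        {d | T ≤ ∑ j, ownCost i (fun k => d k j)} ≤ ENNReal.ofReal (exp (m * (2 * a) - T)) := by
  simpa using measure_le_sum_col_le_exp (κ := Fin m) (measurable_ownCost i)
    (lintegral_exp_le_exp_two_mul (measurable_ownCost i) (ownCost_mem_Icc i) ha hZ) T

theorem measure_sum_indicator_crossBox_le_le (hD : PDFBounded01 D α β) (hα : 0 ≤ α)
    {i i' : Fin n} (hii' : i ≠ i') (T : ℝ) :
    (Measure.pi fun _ : Fin n => Measure.pi fun _ : Fin m => D)
        {d | ∑ j, (crossBox i i' (1 / (2 * β * n))).indicator 1 (fun k => d k j) ≤ T} ≤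
      ENNReal.ofReal (exp (T - m * (α ^ 2 / (8 * β * n)) / 2)) := by
  set B := crossBox i i' (1 / (2 * β * n))
  have hB : MeasurableSet B := measurableSet_crossBox _ _ _
  have hg : Measurable fun x => -B.indicator (1 : (Fin n → ℝ) → ℝ) x :=
    (measurable_const.indicator hB).neg
  have := measure_le_sum_col_le_exp (κ := Fin m) hg
    (lintegral_exp_neg_indicator_le hB (ofReal_le_measure_crossBox hD hα hii')) (-T)
  simp only [Finset.sum_neg_distrib, neg_le_neg_iff, Fintype.card_fin] at this
  exact this.trans (le_of_eq (by ring_nf))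

theorem measure_pairBadEvent_le (hD : PDFBounded01 D α β) (hα : 0 ≤ α) {i : Fin n}
    (hown : ∫⁻ x, ENNReal.ofReal (ownCost i x) ∂Measure.pi (fun _ : Fin n => D) ≤
      ENNReal.ofReal (α ^ 2 / (8 * β * n) / 32)) (i' : Fin n) :
    (Measure.pi fun _ : Fin n => Measure.pi fun _ : Fin m => D)
        (pairBadEvent (1 / (2 * β * n)) (m * (α ^ 2 / (8 * β * n)) / 8) i i') ≤
      ENNReal.ofReal (exp (-(m * (α ^ 2 / (8 * β * n)) / 16))) := by
  have hp : 0 ≤ α ^ 2 / (8 * β * n) := by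
    have := hD.one_le
    positivity
  by_cases hii' : i = i'
  · rw [pairBadEvent, if_pos hii']
    refine (measure_le_sum_ownCost_le i (by positivity) hown _).trans (le_of_eq ?_)
    ring_nf
  · rw [pairBadEvent, if_neg hii']
    refine (measure_sum_indicator_crossBox_le_le hD hα hii' _).trans ?_
    gcongr
    nlinarith [mul_nonneg (Nat.cast_nonneg m : (0 : ℝ) ≤ m) hp]

theorem one_sub_le_measure_envyFree (hD : PDFBounded01 D α β) (hα : 0 ≤ α)
    (hown : ∀ i : Fin n, ∫⁻ x, ENNReal.ofReal (ownCost i x) ∂Measure.pi (fun _ : Fin n => D) ≤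
      ENNReal.ofReal (α ^ 2 / (8 * β * n) / 32)) :
    1 - (n : ℝ≥0∞) ^ 2 * ENNReal.ofReal (exp (-(m * (α ^ 2 / (8 * β * n)) / 16))) ≤
      (Measure.pi fun _ : Fin n => Measure.pi fun _ : Fin m => D)
        {d | ∀ A : Fin m → Fin n, IsCostMinimizing d A → IsEnvyFree d A} := by
  set M := Measure.pi fun _ : Fin n => Measure.pi fun _ : Fin m => D
  set bad := pairBadEvent (m := m) (1 / (2 * β * n)) (m * (α ^ 2 / (8 * β * n)) / 8)
  have hgood : {d | ∀ A, IsCostMinimizing d A → IsEnvyFree d A}ᶜ ≤ᵐ[M]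
      ⋃ i, ⋃ i', bad i i' := by
    filter_upwards [hD.ae_mem_Icc_pi] with d hd hnot
    by_contra hmem
    change d ∉ ⋃ i, ⋃ i', bad i i' at hmem
    simp only [mem_iUnion, not_exists] at hmem
    exact hnot fun A hA => isEnvyFree_of_forall_notMem_pairBadEvent hd hA
      (one_div_two_mul_mul_le_half hD.one_le n) hmem
  calc 1 - (n : ℝ≥0∞) ^ 2 * ENNReal.ofReal (exp (-(m * (α ^ 2 / (8 * β * n)) / 16)))
      ≤ 1 - ∑ i, ∑ i', M (bad i i') := by
        gcongr
        calc ∑ i, ∑ i', M (bad i i')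
            ≤ ∑ _i : Fin n, ∑ _i' : Fin n,
                ENNReal.ofReal (exp (-(m * (α ^ 2 / (8 * β * n)) / 16))) := by
              gcongr with i _ i' _
              exact measure_pairBadEvent_le hD hα (hown i) i'
          _ = _ := by simp [sq, mul_assoc]
    _ ≤ 1 - M (⋃ i, ⋃ i', bad i i') := by
        gcongr
        exact (measure_iUnion_fintype_le _ _).trans
          (Finset.sum_le_sum fun i _ => measure_iUnion_fintype_le _ _)
    _ ≤ M {d | ∀ A, IsCostMinimizing d A → IsEnvyFree d A} :=
        one_sub_measure_le_of_compl_ae_le hgood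

end Tails

theorem exp_neg_three_mul_log {x : ℝ} (hx : 0 < x) : exp (-(3 * log x)) = 1 / x ^ 3 := by
  rw [show 3 * log x = log (x ^ 3) by rw [log_pow]; norm_num, exp_neg, exp_log (by positivity),
    one_div]

theorem eventually_lintegral_ownCost_le {D : Measure ℝ} [IsProbabilityMeasure D] {α β : ℝ}
    (hD : PDFBounded01 D α β) (hα : 0 < α) :
    ∀ᶠ n : ℕ in atTop, ∀ i : Fin n,
      ∫⁻ x, ENNReal.ofReal (ownCost i x) ∂Measure.pi (fun _ : Fin n => D) ≤
        ENNReal.ofReal (α ^ 2 / (8 * β * n) / 32) := by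
  have hβ : 0 < β := by linarith [hD.one_le]
  have hlim : Tendsto (fun n : ℕ => 9 * β / α ^ 2 * (log n ^ 2 / n) + (1 / (n : ℝ)) ^ 2)
      atTop (nhds 0) := by
    have hlog := (tendsto_pow_log_div_mul_add_atTop 1 0 2 one_ne_zero).comp
      tendsto_natCast_atTop_atTop
    simpa using (hlog.const_mul (9 * β / α ^ 2)).add
      (tendsto_one_div_atTop_nhds_zero_nat.pow 2)
  filter_upwards [hlim.eventually (gt_mem_nhds (by positivity : 0 < α ^ 2 / (256 * β))),
    eventually_gt_atTop 0] with n hn hn0 i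
  have hn0' : (0 : ℝ) < n := by exact_mod_cast hn0
  set s := 3 * log n / (α * n) with hs_def
  have hs : α * s * n = 3 * log n := by rw [hs_def]; field_simp
  refine (lintegral_ownCost_le hD hα.le hβ.le i (s := s) (by positivity)).trans ?_
  rw [hs, exp_neg_three_mul_log hn0']
  gcongr
  calc β * s ^ 2 + 1 / n ^ 3
      = 1 / n * (9 * β / α ^ 2 * (log n ^ 2 / n) + (1 / (n : ℝ)) ^ 2) := by
        rw [hs_def]
        field_simp
        ring
    _ ≤ 1 / n * (α ^ 2 / (256 * β)) := by gcongr
    _ = α ^ 2 / (8 * β * n) / 32 := by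
        field_simp
        norm_num

theorem natCast_sq_mul_exp_le_one_div {α β : ℝ} (hα : 0 < α) (hβ : 0 < β) {n m : ℕ}
    (hn : 0 < n) (hm : 384 * β / α ^ 2 * n * log n ≤ m) :
    (n : ℝ≥0∞) ^ 2 * ENNReal.ofReal (exp (-(m * (α ^ 2 / (8 * β * n)) / 16))) ≤
      ENNReal.ofReal (1 / n) := by
  have hn' : (0 : ℝ) < n := by exact_mod_cast hn
  have hexp : exp (-(m * (α ^ 2 / (8 * β * n)) / 16)) ≤ 1 / n ^ 3 := by
    rw [← exp_neg_three_mul_log hn']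
    gcongr
    calc 3 * log n = 384 * β / α ^ 2 * n * log n * (α ^ 2 / (8 * β * n)) / 16 := by
          field_simp
          ring
      _ ≤ m * (α ^ 2 / (8 * β * n)) / 16 := by gcongr
  calc (n : ℝ≥0∞) ^ 2 * ENNReal.ofReal (exp (-(m * (α ^ 2 / (8 * β * n)) / 16)))
      ≤ ENNReal.ofReal (n ^ 2 * (1 / n ^ 3)) := by
        rw [ENNReal.ofReal_mul (by positivity), ENNReal.ofReal_pow hn'.le, ENNReal.ofReal_natCast]
        gcongr
    _ = ENNReal.ofReal (1 / n) := by field_simp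

theorem costMinimizing_envyFree_whp_general (α β : ℝ) (hα : 0 < α)
    (D : Measure ℝ) [IsProbabilityMeasure D] (hD : PDFBounded01 D α β) :
    ∃ c : ℝ, 0 < c ∧ ∀ m : ℕ → ℕ, (∀ n : ℕ, c * (n : ℝ) * Real.log (n : ℝ) ≤ (m n : ℝ)) →
      Tendsto
        (fun n => (Measure.pi fun _ : Fin n => Measure.pi fun _ : Fin (m n) => D)
          {d | ∀ A : Fin (m n) → Fin n, IsCostMinimizing d A → IsEnvyFree d A})
        atTop (nhds 1) := by
  have hβ : 0 < β := by linarith [hD.one_le]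
  refine ⟨384 * β / α ^ 2, by positivity, fun m hm => ?_⟩
  have hlow : ∀ᶠ n : ℕ in atTop, 1 - ENNReal.ofReal (1 / n) ≤
      (Measure.pi fun _ : Fin n => Measure.pi fun _ : Fin (m n) => D)
        {d | ∀ A : Fin (m n) → Fin n, IsCostMinimizing d A → IsEnvyFree d A} := by
    filter_upwards [eventually_lintegral_ownCost_le hD hα, eventually_gt_atTop 0] with n hown hn
    exact (tsub_le_tsub_left (natCast_sq_mul_exp_le_one_div hα hβ hn (hm n)) 1).trans
      (one_sub_le_measure_envyFree hD hα.le hown)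
  have hlim : Tendsto (fun n : ℕ => 1 - ENNReal.ofReal (1 / n)) atTop (nhds 1) := by
    simpa using ENNReal.Tendsto.sub tendsto_const_nhds
      (ENNReal.tendsto_ofReal tendsto_one_div_atTop_nhds_zero_nat) (Or.inl ENNReal.one_ne_top)
  exact tendsto_of_tendsto_of_tendsto_of_le_of_le' hlim tendsto_const_nhds hlow
    (Eventually.of_forall fun _ => prob_le_one)

/-- There is a constant `c > 0` (depending only on the distribution) such that, whenever
`m n ≥ c · n · log n`, the allocation assigning each chore to an agent with the smallest
disutility for it is envy-free with high probability. -/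
theorem costMinimizing_envyFree_whp (α β : ℝ) (hα : 0 < α) (hαβ : α ≤ β)
    (D : Measure ℝ) [IsProbabilityMeasure D] (hD : PDFBounded01 D α β) :
    ∃ c : ℝ, 0 < c ∧ ∀ m : ℕ → ℕ, (∀ n : ℕ, c * (n : ℝ) * Real.log (n : ℝ) ≤ (m n : ℝ)) →
      Tendsto
        (fun n => (Measure.pi fun _ : Fin n => Measure.pi fun _ : Fin (m n) => D)
          {d | ∀ A : Fin (m n) → Fin n, IsCostMinimizing d A → IsEnvyFree d A})
        atTop (nhds 1) :=
  costMinimizing_envyFree_whp_general α β hα D hD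
end

section
/- Consider n agents and m chores, where all disutilities d_i(j) are strictly positive and, for each agent i, the minimizer argmin_{j} d_i(j) (agent i's favorite chore) is unique. If the number of repeated favorite chores—chores that are the favorite chore of more than one agent—is strictly greater than 2(m − n), then no envy-free allocation of the chores exists. -/
/-- If all disutilities are positive, each agent `i` has a unique favorite chore `fav i`,
and the number of repeated favorite chores (chores that are the favorite of more than one
agent) exceeds `2(m - n)`, then no envy-free allocation exists. -/
theorem no_envyFree_of_many_repeated_favorites (n m : ℕ)
    (d : Fin n → Fin m → ℝ) (hpos : ∀ i j, 0 < d i j)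
    (fav : Fin n → Fin m)
    (hfav : ∀ i : Fin n, ∀ j : Fin m, j ≠ fav i → d i (fav i) < d i j)
    (hT : 2 * ((m : ℤ) - (n : ℤ)) <
      (((Finset.univ.filter (fun j : Fin m =>
        1 < (Finset.univ.filter (fun i : Fin n => fav i = j)).card)).card : ℤ))) :
    ¬ ∃ A : Fin m → Fin n, IsEnvyFree d A := by
  rintro ⟨A, hEF⟩
  set R := Finset.univ.filter (fun j : Fin m =>
      1 < (Finset.univ.filter (fun i : Fin n => fav i = j)).card) with hRdef
  -- dispose of m = 0
  rcases Nat.eq_zero_or_pos m with hm | hm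
  · subst hm
    have hR0 : R.card = 0 := by
      simp [hRdef]
    rw [hR0] at hT
    have hn : 0 < n := by push_cast at hT; omega
    exact (fav ⟨0, hn⟩).elim0
  obtain ⟨j₀⟩ : Nonempty (Fin m) := ⟨⟨0, hm⟩⟩
  -- every bundle is nonempty
  have hbne : ∀ k : Fin n, ∃ c, A c = k := by
    intro k
    by_contra h
    push_neg at h
    have hempty : Finset.univ.filter (fun j => A j = k) = ∅ :=
      Finset.filter_eq_empty_iff.mpr (fun {x} _ => h x)
    have h0 : bundleCost d A (A j₀) k = 0 := by
      unfold bundleCost; rw [hempty, Finset.sum_empty]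
    have h1 : 0 < bundleCost d A (A j₀) (A j₀) := by
      unfold bundleCost
      exact Finset.sum_pos (fun j _ => hpos _ j) ⟨j₀, by simp⟩
    have := hEF (A j₀) k
    rw [h0] at this
    linarith
  -- owner of a repeated favorite chore has bundle of size ≥ 2
  have hbig : ∀ j ∈ R, 2 ≤ (Finset.univ.filter (fun c => A c = A j)).card := by
    intro j hj
    rw [hRdef, Finset.mem_filter] at hj
    obtain ⟨i1, hi1, i2, hi2, h12⟩ := Finset.one_lt_card.mp hj.2
    rw [Finset.mem_filter] at hi1 hi2
    -- pick an agent i ≠ A j whose favorite is j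
    obtain ⟨i, hiA, hifav⟩ : ∃ i : Fin n, i ≠ A j ∧ fav i = j := by
      by_cases h : i1 = A j
      · exact ⟨i2, by rw [← h]; exact fun he => h12 he.symm, hi2.2⟩
      · exact ⟨i1, h, hi1.2⟩
    by_contra hlt
    push_neg at hlt
    have hjmem : j ∈ Finset.univ.filter (fun c => A c = A j) := by simp
    have hcard1 : (Finset.univ.filter (fun c => A c = A j)).card = 1 :=
      le_antisymm (by omega) (Finset.card_pos.mpr ⟨j, hjmem⟩)
    obtain ⟨a, ha⟩ := Finset.card_eq_one.mp hcard1
    have haj : a = j := by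
      rw [ha] at hjmem; exact (Finset.mem_singleton.mp hjmem).symm
    obtain ⟨c, hc⟩ := hbne i
    have hcj : c ≠ j := fun he => hiA (by rw [← hc, he])
    have hcost1 : bundleCost d A i (A j) = d i j := by
      unfold bundleCost; rw [ha, haj, Finset.sum_singleton]
    have hcmem : c ∈ Finset.univ.filter (fun x => A x = i) := by simp [hc]
    have hcost2 : d i c ≤ bundleCost d A i i :=
      Finset.single_le_sum (f := fun x => d i x) (fun x _ => (hpos i x).le) hcmem
    have hlt2 : d i j < d i c := by
      have := hfav i c (by rw [hifav]; exact hcj)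
      rwa [hifav] at this
    have := hEF i (A j)
    rw [hcost1] at this
    linarith
  -- counting
  have hfibR : R.card = ∑ k : Fin n, (R.filter (fun j => A j = k)).card :=
    Finset.card_eq_sum_card_fiberwise (fun j _ => Finset.mem_univ (A j))
  have hfibM : m = ∑ k : Fin n, (Finset.univ.filter (fun c => A c = k)).card := by
    have := Finset.card_eq_sum_card_fiberwise
      (f := A) (s := (Finset.univ : Finset (Fin m))) (t := (Finset.univ : Finset (Fin n)))
      (fun j _ => Finset.mem_univ (A j))
    simpa using this
  have hkey : ∀ k : Fin n, ((R.filter (fun j => A j = k)).card : ℤ) ≤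
      2 * (((Finset.univ.filter (fun c => A c = k)).card : ℤ) - 1) := by
    intro k
    rcases Finset.eq_empty_or_nonempty (R.filter (fun j => A j = k)) with he | ⟨j, hj⟩
    · rw [he]
      have h1 : 1 ≤ (Finset.univ.filter (fun c => A c = k)).card := by
        obtain ⟨c, hc⟩ := hbne k
        exact Finset.card_pos.mpr ⟨c, by simp [hc]⟩
      simp only [Finset.card_empty]
      push_cast
      omega
    · rw [Finset.mem_filter] at hj
      have h2 : 2 ≤ (Finset.univ.filter (fun c => A c = k)).card := by
        have := hbig j hj.1
        rwa [hj.2] at this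
      have hsub : (R.filter (fun j => A j = k)).card ≤
          (Finset.univ.filter (fun c => A c = k)).card := by
        apply Finset.card_le_card
        intro x hx
        rw [Finset.mem_filter] at hx ⊢
        exact ⟨Finset.mem_univ x, hx.2⟩
      omega
  have hsum : (R.card : ℤ) ≤ 2 * ((m : ℤ) - (n : ℤ)) := by
    have h1 : (R.card : ℤ) = ∑ k : Fin n, ((R.filter (fun j => A j = k)).card : ℤ) := by
      rw [hfibR]; push_cast; ring
    have h2 : ∑ k : Fin n, ((R.filter (fun j => A j = k)).card : ℤ) ≤
        ∑ k : Fin n, 2 * (((Finset.univ.filter (fun c => A c = k)).card : ℤ) - 1) :=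
      Finset.sum_le_sum (fun k _ => hkey k)
    have hsumcards : ∑ k : Fin n, ((Finset.univ.filter (fun c => A c = k)).card : ℤ) = m := by
      rw [← Nat.cast_sum]; exact_mod_cast hfibM.symm
    have h3 : ∑ k : Fin n, 2 * (((Finset.univ.filter (fun c => A c = k)).card : ℤ) - 1)
        = 2 * ((m : ℤ) - (n : ℤ)) := by
      rw [← Finset.mul_sum, Finset.sum_sub_distrib, hsumcards]
      simp [Finset.card_univ]
    rw [h1]
    rw [h3] at h2
    exact h2
  linarith
end

section
/- Let Z_1, ..., Z_n be independent random variables, each uniformly distributed on a set M of m elements, and let T = |{j ∈ M : |{i : Z_i = j}| > 1}|. Then E[T] ≥ m·(1 − (1 + (n−1)/m)·e^{−(n−1)/m}). -/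
/-! By linearity of expectation, `E[T] = ∑ⱼ P(j is the value of at least two Zᵢ)`.
The complementary event, that `j` is taken by no `Zᵢ` or by exactly one, has probability
at most `(1 - 1/m)ⁿ + n (1/m) (1 - 1/m)ⁿ⁻¹ = (1 + (n-1)/m) (1 - 1/m)ⁿ⁻¹`, and `1 - x ≤ e⁻ˣ`
bounds this by `(1 + (n-1)/m) e^{-(n-1)/m}`. -/

open MeasureTheory ProbabilityTheory

/-- The number of elements of `Fin m` taken as value by more than one of the coordinates
of `z`. -/
def repeatCount {n m : ℕ} (z : Fin n → Fin m) : ℕ :=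
  (Finset.univ.filter (fun j : Fin m =>
    1 < (Finset.univ.filter (fun i : Fin n => z i = j)).card)).card

open Finset

lemma one_sub_pow_add_mul_one_sub_pow_le {n : ℕ} (hn : n ≠ 0) {p : ℝ} (hp₀ : 0 ≤ p)
    (hp₁ : p ≤ 1) :
    (1 - p) ^ n + n * p * (1 - p) ^ (n - 1) ≤
      (1 + (n - 1) * p) * Real.exp (-((n - 1) * p)) := by
  obtain ⟨k, rfl⟩ := Nat.exists_eq_succ_of_ne_zero hn
  calc (1 - p) ^ (k + 1) + (k + 1 : ℕ) * p * (1 - p) ^ (k + 1 - 1)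
      = (1 + k * p) * (1 - p) ^ k := by simp only [Nat.add_sub_cancel]; push_cast; ring
    _ ≤ (1 + k * p) * Real.exp (-p) ^ k := by
        gcongr
        exact Real.one_sub_le_exp_neg p
    _ = (1 + ((k + 1 : ℕ) - 1) * p) * Real.exp (-(((k + 1 : ℕ) - 1) * p)) := by
        rw [← Real.exp_nat_mul]; push_cast; ring_nf

section Counting

variable {Ω ι β : Type*} [MeasurableSpace Ω] {P : Measure Ω} [IsProbabilityMeasure P]
  [Fintype ι] [MeasurableSpace β] [MeasurableSingletonClass β]
  {Z : ι → Ω → β} {b : β} {p : ℝ}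

lemma measurable_card_filter_eq [DecidableEq β] (hZ : ∀ i, Measurable (Z i)) (b : β) :
    Measurable fun ω => #{i | Z i ω = b} := by
  simp_rw [card_filter]
  exact Finset.measurable_sum _ fun i _ =>
    Measurable.ite (hZ i (measurableSet_singleton b)) measurable_const measurable_const

lemma measureReal_forall_eq_iff_mem (hZ : ∀ i, Measurable (Z i)) (hind : iIndepFun Z P)
    (hp : ∀ i, P.real {ω | Z i ω = b} = p) (A : Finset ι) :
    P.real {ω | ∀ i, Z i ω = b ↔ i ∈ A} = p ^ #A * (1 - p) ^ (Fintype.card ι - #A) := by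
  classical
  have hset :
      {ω | ∀ i, Z i ω = b ↔ i ∈ A} = ⋂ i, Z i ⁻¹' (if i ∈ A then {b} else {b}ᶜ) := by
    ext ω
    simp only [Set.mem_iInter]
    exact forall_congr' fun i => by split_ifs with h <;> simp [h]
  have hfactor (i : ι) :
      P.real (Z i ⁻¹' (if i ∈ A then {b} else {b}ᶜ)) = if i ∈ A then p else 1 - p := by
    split_ifs
    · exact hp i
    · rw [Set.preimage_compl, probReal_compl_eq_one_sub (hZ i (measurableSet_singleton b))]
      exact congrArg (1 - ·) (hp i)
  rw [hset, measureReal_def, hind.meas_iInter fun i => ⟨_, by split_ifs <;> simp, rfl⟩,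
    ENNReal.toReal_prod]
  simp_rw [← measureReal_def, hfactor, prod_ite, prod_const, filter_not]
  simp only [subset_univ, filter_mem_eq_of_subset, card_sdiff, card_univ, inter_univ]

lemma measureReal_card_filter_eq_le_one_le [DecidableEq β] (hZ : ∀ i, Measurable (Z i))
    (hind : iIndepFun Z P) (hp : ∀ i, P.real {ω | Z i ω = b} = p) :
    P.real {ω | #{i | Z i ω = b} ≤ 1} ≤
      (1 - p) ^ Fintype.card ι + Fintype.card ι * p * (1 - p) ^ (Fintype.card ι - 1) := by
  have hsub : {ω | #{i | Z i ω = b} ≤ 1} ⊆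
      {ω | ∀ i, Z i ω = b ↔ i ∈ (∅ : Finset ι)} ∪
        ⋃ i₀, {ω | ∀ i, Z i ω = b ↔ i ∈ ({i₀} : Finset ι)} := by
    intro ω hω
    have hmem (i : ι) : Z i ω = b ↔ i ∈ ({i | Z i ω = b} : Finset ι) := by simp
    rcases Nat.le_one_iff_eq_zero_or_eq_one.1 hω.out with h | h
    · left; simpa [card_eq_zero.1 h] using hmem
    · obtain ⟨i₀, hi₀⟩ := card_eq_one.1 h
      right; exact Set.mem_iUnion.2 ⟨i₀, by simpa [hi₀] using hmem⟩
  calc P.real {ω | #{i | Z i ω = b} ≤ 1}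
      ≤ P.real {ω | ∀ i, Z i ω = b ↔ i ∈ (∅ : Finset ι)} +
          ∑ i₀, P.real {ω | ∀ i, Z i ω = b ↔ i ∈ ({i₀} : Finset ι)} :=
        (measureReal_mono hsub).trans <| (measureReal_union_le _ _).trans <| by
          gcongr; exact measureReal_iUnion_fintype_le _
    _ = _ := by
        simp only [measureReal_forall_eq_iff_mem hZ hind hp, card_empty, card_singleton, sum_const,
          card_univ, nsmul_eq_mul, pow_zero, Nat.sub_zero]
        ring

lemma one_sub_le_measureReal_one_lt_card_filter_eq [DecidableEq β] [Nonempty ι]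
    (hZ : ∀ i, Measurable (Z i)) (hind : iIndepFun Z P)
    (hp : ∀ i, P.real {ω | Z i ω = b} = p) :
    1 - (1 + (Fintype.card ι - 1) * p) * Real.exp (-((Fintype.card ι - 1) * p)) ≤
      P.real {ω | 1 < #{i | Z i ω = b}} := by
  obtain ⟨i⟩ := ‹Nonempty ι›
  have hp₀ : 0 ≤ p := hp i ▸ measureReal_nonneg
  have hp₁ : p ≤ 1 := hp i ▸ measureReal_le_one
  have hcompl : {ω | 1 < #{i | Z i ω = b}} = {ω | #{i | Z i ω = b} ≤ 1}ᶜ := by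
    ext; simp
  have hmeas : MeasurableSet {ω | #{i | Z i ω = b} ≤ 1} :=
    measurable_card_filter_eq hZ b measurableSet_Iic
  rw [hcompl, probReal_compl_eq_one_sub hmeas]
  linarith [measureReal_card_filter_eq_le_one_le hZ hind hp,
    one_sub_pow_add_mul_one_sub_pow_le (Fintype.card_ne_zero (α := ι)) hp₀ hp₁]

end Counting

lemma integral_repeatCount {n m : ℕ} {Ω : Type*} [MeasurableSpace Ω] {P : Measure Ω}
    [IsFiniteMeasure P] {Z : Fin n → Ω → Fin m} (hZ : ∀ i, Measurable (Z i)) :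
    ∫ ω, (repeatCount (fun i => Z i ω) : ℝ) ∂P =
      ∑ j, P.real {ω | 1 < #{i | Z i ω = j}} := by
  have hmeas (j : Fin m) : MeasurableSet {ω | 1 < #{i | Z i ω = j}} :=
    measurable_card_filter_eq hZ j measurableSet_Ioi
  have hsum (ω : Ω) : (repeatCount (fun i => Z i ω) : ℝ) =
      ∑ j, {ω | 1 < #{i | Z i ω = j}}.indicator 1 ω := by
    rw [repeatCount, card_filter]
    push_cast
    simp [Set.indicator_apply]
  simp_rw [hsum]
  refine (integral_finsetSum _ fun j _ => ?_).trans
    (sum_congr rfl fun j _ => integral_indicator_one (hmeas j))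
  exact (integrable_const 1).indicator (hmeas j)

theorem expected_repeatCount_ge_general (n m : ℕ) (hn : 2 ≤ n)
    {Ω : Type*} [MeasurableSpace Ω] (P : Measure Ω) [IsProbabilityMeasure P]
    (Z : Fin n → Ω → Fin m) (hmeas : ∀ i, Measurable (Z i))
    (hindep : iIndepFun Z P)
    (hunif : ∀ (i : Fin n) (j : Fin m), P {ω | Z i ω = j} = ((m : ENNReal))⁻¹) :
    m * (1 - (1 + ((n : ℝ) - 1) / m) * Real.exp (-((n : ℝ) - 1) / m)) ≤
      ∫ ω, (repeatCount (fun i => Z i ω) : ℝ) ∂P := by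
  have : Nonempty (Fin n) := ⟨⟨0, by omega⟩⟩
  have hunif_real (j : Fin m) (i : Fin n) : P.real {ω | Z i ω = j} = (m : ℝ)⁻¹ := by
    simp [measureReal_def, hunif]
  have hrepeat (j : Fin m) :
      1 - (1 + ((n : ℝ) - 1) / m) * Real.exp (-((n : ℝ) - 1) / m) ≤
        P.real {ω | 1 < #{i | Z i ω = j}} := by
    simpa only [Fintype.card_fin, div_eq_mul_inv, neg_mul] using
      one_sub_le_measureReal_one_lt_card_filter_eq hmeas hindep (hunif_real j)
  rw [integral_repeatCount hmeas]
  have hsum := sum_le_sum (s := univ) fun j _ => hrepeat j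
  rwa [sum_const, card_univ, Fintype.card_fin, nsmul_eq_mul] at hsum

/-- If `Z 1, ..., Z n` are independent and each uniformly distributed on a set of `m`
elements, then the expected number of elements chosen by more than one of them is
at least `m (1 - (1 + (n-1)/m) e^{-(n-1)/m})`. -/
theorem expected_repeatCount_ge (n m : ℕ) (hn : 2 ≤ n) (hm : 2 ≤ m)
    {Ω : Type*} [MeasurableSpace Ω] (P : Measure Ω) [IsProbabilityMeasure P]
    (Z : Fin n → Ω → Fin m) (hmeas : ∀ i, Measurable (Z i))
    (hindep : iIndepFun Z P)
    (hunif : ∀ (i : Fin n) (j : Fin m), P {ω | Z i ω = j} = ((m : ENNReal))⁻¹) :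
    m * (1 - (1 + ((n : ℝ) - 1) / m) * Real.exp (-((n : ℝ) - 1) / m)) ≤
      ∫ ω, (repeatCount (fun i => Z i ω) : ℝ) ∂P :=
  expected_repeatCount_ge_general n m hn P Z hmeas hindep hunif
end

section
/- Let Z_1, ..., Z_n be independent random variables taking values in a set M of m elements, and let T = |{j ∈ M : |{i : Z_i = j}| > 1}|. Then Var(T) ≤ n/4. -/
/-! Changing one of the `Z i` changes `repeatCount` by at most one. For a function `f` with this
bounded-difference property under a product measure, splitting off the first coordinate writes
`Var f` as the mean of the conditional variances, bounded by induction, plus the variance of the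
conditional mean. The conditional mean again has oscillation at most one, so by Popoviciu's
inequality its variance is at most `1/4`; each coordinate thus contributes `1/4`. Independence
makes the law of `(Z 1, ..., Z n)` such a product measure. -/

open MeasureTheory ProbabilityTheory

section Oscillation

variable {Ω : Type*} [MeasurableSpace Ω] {μ : Measure Ω} [IsProbabilityMeasure μ]

lemma variance_le_of_forall_sub_le {X : Ω → ℝ} (hX : AEMeasurable X μ) {c : ℝ}
    (h : ∀ ω ω', X ω - X ω' ≤ c) : Var[X; μ] ≤ (c / 2) ^ 2 := by
  have := nonempty_of_isProbabilityMeasure μ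
  have hbdd : BddBelow (Set.range X) :=
    ⟨X (Classical.arbitrary Ω) - c, by
      rintro _ ⟨ω, rfl⟩
      linarith [h (Classical.arbitrary Ω) ω]⟩
  have hX_mem : ∀ ω, X ω ∈ Set.Icc (⨅ ω, X ω) ((⨅ ω, X ω) + c) := fun ω =>
    ⟨ciInf_le hbdd ω, by linarith [le_ciInf fun ω' => (by linarith [h ω ω'] : X ω - c ≤ X ω')]⟩
  simpa using variance_le_sq_of_bounded (ae_of_all μ hX_mem) hX

end Oscillation

section FiniteProduct

variable {α β : Type*} [MeasurableSpace α] [MeasurableSingletonClass α] [Finite α]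
  [MeasurableSpace β] [MeasurableSingletonClass β] [Finite β]

lemma variance_prod_eq_integral_variance_add (μ : Measure α) (ν : Measure β)
    [IsProbabilityMeasure μ] [IsProbabilityMeasure ν] (f : α × β → ℝ) :
    Var[f; μ.prod ν] =
      ∫ a, Var[fun b => f (a, b); ν] ∂μ + Var[fun a => ∫ b, f (a, b) ∂ν; μ] := by
  simp only [variance_eq_sub MemLp.of_discrete, Pi.pow_apply]
  rw [integral_prod _ .of_finite, integral_prod _ .of_finite, integral_sub .of_finite .of_finite]
  ring

lemma variance_pi_fin_succ_eq {n : ℕ} (μ : Fin (n + 1) → Measure α)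
    [∀ i, IsProbabilityMeasure (μ i)] (f : (Fin (n + 1) → α) → ℝ) :
    Var[f; Measure.pi μ] =
      ∫ a, Var[fun y => f (Fin.cons a y); Measure.pi fun i => μ i.succ] ∂μ 0 +
        Var[fun a => ∫ y, f (Fin.cons a y) ∂Measure.pi fun i => μ i.succ; μ 0] := by
  rw [← (measurePreserving_piFinSuccAbove μ 0).symm.map_eq, variance_map_equiv,
    variance_prod_eq_integral_variance_add]
  simp only [Function.comp_apply, MeasurableEquiv.piFinSuccAbove_symm_apply,
    Fin.insertNthEquiv_zero, Fin.succAbove_zero]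
  rfl

theorem variance_pi_le_of_update_sub_le {n : ℕ} (μ : Fin n → Measure α)
    [∀ i, IsProbabilityMeasure (μ i)] {f : (Fin n → α) → ℝ} {c : ℝ}
    (hf : ∀ x i a, f (Function.update x i a) - f x ≤ c) :
    Var[f; Measure.pi μ] ≤ n * (c / 2) ^ 2 := by
  induction n with
  | zero =>
    simpa using variance_le_of_forall_sub_le (c := 0) (μ := Measure.pi μ) .of_discrete
      fun x y => by rw [Subsingleton.elim x y, sub_self]
  | succ n ih =>
    rw [variance_pi_fin_succ_eq]
    set ν := Measure.pi fun i : Fin n => μ i.succ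
    have h_cond : ∀ a, Var[fun y => f (Fin.cons a y); ν] ≤ n * (c / 2) ^ 2 := fun a =>
      ih _ fun y i b => by simpa only [Fin.cons_update] using hf (Fin.cons a y) i.succ b
    have h_mean : ∀ a b, ∫ y, f (Fin.cons a y) ∂ν - ∫ y, f (Fin.cons b y) ∂ν ≤ c := by
      intro a b
      rw [← integral_sub .of_finite .of_finite]
      calc ∫ y, f (Fin.cons a y) - f (Fin.cons b y) ∂ν ≤ ∫ _, c ∂ν :=
            integral_mono .of_finite (integrable_const c) fun y => by
              simpa only [Fin.update_cons_zero] using hf (Fin.cons b y) 0 a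
        _ = c := by simp
    calc _ ≤ ∫ _, (n : ℝ) * (c / 2) ^ 2 ∂μ 0 + (c / 2) ^ 2 :=
          add_le_add (integral_mono .of_finite (integrable_const _) h_cond)
            (variance_le_of_forall_sub_le .of_discrete h_mean)
      _ = (n + 1 : ℕ) * (c / 2) ^ 2 := by
        rw [integral_const, probReal_univ, one_smul]
        push_cast
        ring

end FiniteProduct

lemma repeatCount_update_le {n m : ℕ} (z : Fin n → Fin m) (i : Fin n) (a : Fin m) :
    repeatCount (Function.update z i a) ≤ repeatCount z + 1 := by
  unfold repeatCount
  refine (Finset.card_le_card fun j hj => ?_).trans (Finset.card_insert_le a _)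
  rcases eq_or_ne j a with rfl | hja
  · exact Finset.mem_insert_self _ _
  refine Finset.mem_insert_of_mem ?_
  simp only [Finset.mem_filter, Finset.mem_univ, true_and] at hj ⊢
  refine hj.trans_le (Finset.card_le_card fun k hk => ?_)
  simp only [Finset.mem_filter, Finset.mem_univ, true_and] at hk ⊢
  rcases eq_or_ne k i with rfl | hki
  · rw [Function.update_self] at hk
    exact absurd hk.symm hja
  · rwa [Function.update_of_ne hki] at hk

/-- If `Z 1, ..., Z n` are independent random variables with values in a set of `m`
elements, then the variance of the number of elements taken as value by more than one of
them is at most `n/4`. -/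
theorem variance_repeatCount_le (n m : ℕ)
    {Ω : Type*} [MeasurableSpace Ω] (P : Measure Ω) [IsProbabilityMeasure P]
    (Z : Fin n → Ω → Fin m) (hmeas : ∀ i, Measurable (Z i))
    (hindep : iIndepFun Z P) :
    variance (fun ω => (repeatCount (fun i => Z i ω) : ℝ)) P ≤ (n : ℝ) / 4 := by
  have hlaw := hindep.map_fun_eq_pi_map fun i => (hmeas i).aemeasurable
  have hV : AEMeasurable (fun ω i => Z i ω) P := (measurable_pi_lambda _ hmeas).aemeasurable
  have hZ_prob (i : Fin n) : IsProbabilityMeasure (P.map (Z i)) :=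
    Measure.isProbabilityMeasure_map (hmeas i).aemeasurable
  have hdiff (z : Fin n → Fin m) (i : Fin n) (a : Fin m) :
      (repeatCount (Function.update z i a) : ℝ) - repeatCount z ≤ 1 := by
    rw [sub_le_iff_le_add']
    exact_mod_cast repeatCount_update_le z i a
  calc _ = Var[fun z => (repeatCount z : ℝ); P.map fun ω i => Z i ω] :=
        (variance_map .of_discrete hV).symm
    _ ≤ n * (1 / 2) ^ 2 := by
        rw [hlaw]
        exact variance_pi_le_of_update_sub_le _ hdiff
    _ = n / 4 := by ring
end

section
/- Let ν be the unique positive solution of ν(1 + (1 + 1/ν)e^{-1/ν}) = 2 and fix a constant ε ∈ (0, ν). Let Z_1, ..., Z_n be independent random variables, each uniformly distributed on a set M of m elements with m ≤ (ν − ε)n, and let T = |{j ∈ M : |{i : Z_i = j}| > 1}|. Then Pr[T ≤ 2(m − n)] = O(1/n); that is, there exist constants C > 0 and N_0 (depending only on ε) such that Pr[T ≤ 2(m − n)] ≤ C/n for all n ≥ N_0. -/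
/-!
Let `L = m - T` be the number of values taken at most once ("lonely" values), so that the event
is `L ≥ 2n - m ≥ (2 - ν + ε) n`. Counting functions `Fin n → Fin m` by the fibres of one or two
fixed values gives `E L = m (1 - 1/m)^n + n (1 - 1/m)^(n-1) ≤ (m + n) e^(-n/m) + 1`, and since
`m ≤ ν n` this is at most `(ν + 1) n e^(-1/ν) + 1 = (2 - ν) n + 1` by the equation defining `ν`.
The pair counts give `Var L ≤ 7 n` (for `n ≤ m`; if `m < n` the event is empty). Chebyshev's
inequality at distance `ε n / 2` bounds the probability by `28 / (ε² n)`.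
-/

open Finset Real MeasureTheory ProbabilityTheory
open Fintype (card piFinset)

section Counting

variable {α β : Type*} [Fintype α] [DecidableEq α] [Fintype β] [DecidableEq β]

theorem card_filter_fiber_eq (j : β) (A : Finset α) :
    #{f : α → β | ({a | f a = j} : Finset α) = A} = (card β - 1) ^ (card α - #A) := by
  have : ({f : α → β | ({a | f a = j} : Finset α) = A} : Finset _) =
      piFinset (fun a => if a ∈ A then {j} else {j}ᶜ) := by
    ext f
    simp only [mem_filter, mem_univ, true_and, Fintype.mem_piFinset, Finset.ext_iff]
    refine forall_congr' fun a => ?_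
    split_ifs with ha <;> simp [ha]
  simp_rw [this, Fintype.card_piFinset, apply_ite Finset.card, prod_ite]
  simp [filter_notMem_eq_sdiff, card_univ_sdiff, card_compl]

theorem card_filter_fiber_eq_and_fiber_eq_le {j k : β} (hjk : j ≠ k) (A B : Finset α) :
    #{f : α → β | ({a | f a = j} : Finset α) = A ∧ ({a | f a = k} : Finset α) = B} ≤
      (card β - 2) ^ (card α - #A - #B) := by
  by_cases hAB : Disjoint A B
  · have hsub : ({f : α → β | ({a | f a = j} : Finset α) = A ∧ ({a | f a = k} : Finset α) = B}
        : Finset _) ⊆ piFinset (fun a => if a ∈ A ∪ B then (if a ∈ A then {j} else {k})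
          else {j, k}ᶜ) := by
      rintro f hf
      simp only [mem_filter, mem_univ, true_and, Finset.ext_iff] at hf
      simp only [Fintype.mem_piFinset]
      intro a
      by_cases ha : a ∈ A <;> by_cases hb : a ∈ B <;> simp_all
    calc _ ≤ _ := card_le_card hsub
      _ = _ := by
        simp_rw [Fintype.card_piFinset, apply_ite Finset.card]
        rw [prod_ite, filter_notMem_eq_sdiff, prod_const, card_univ_sdiff,
          card_union_of_disjoint hAB, Nat.sub_sub, card_compl, card_pair hjk]
        simp
  · convert Nat.zero_le _
    rw [Finset.card_eq_zero, filter_eq_empty_iff]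
    rintro f - ⟨rfl, rfl⟩
    exact hAB (disjoint_filter.2 fun a _ hj hk => hjk (hj ▸ hk))

theorem sum_filter_card_le_one {M : Type*} [AddCommMonoid M] (h : ℕ → M) :
    ∑ A : Finset α with #A ≤ 1, h #A = h 0 + card α • h 1 := by
  have : ({A : Finset α | #A ≤ 1} : Finset _) = powersetCard 0 univ ∪ powersetCard 1 univ := by
    ext A
    simp [Nat.le_one_iff_eq_zero_or_eq_one]
  rw [this, sum_union (univ.pairwise_disjoint_powersetCard zero_ne_one), powersetCard_zero,
    powersetCard_one]
  simp

theorem card_filter_card_fiber_le_one (j : β) :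
    #{f : α → β | #({a | f a = j} : Finset α) ≤ 1} =
      (card β - 1) ^ card α + card α * (card β - 1) ^ (card α - 1) := by
  rw [card_eq_sum_card_fiberwise (f := fun f => ({a | f a = j} : Finset α))
    (t := {A | #A ≤ 1}) (fun f hf => by simpa using hf)]
  have hfiber : ∀ A ∈ ({A | #A ≤ 1} : Finset (Finset α)),
      #{f ∈ ({f : α → β | #({a | f a = j} : Finset α) ≤ 1} : Finset _) |
        ({a | f a = j} : Finset α) = A} = (card β - 1) ^ (card α - #A) := by
    intro A hA
    rw [← card_filter_fiber_eq j A, filter_filter]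
    congr 1
    refine filter_congr fun f _ => ⟨And.right, fun h => ⟨?_, h⟩⟩
    simpa [h] using hA
  rw [sum_congr rfl hfiber, sum_filter_card_le_one (fun k => (card β - 1) ^ (card α - k))]
  simp

theorem card_filter_card_fiber_le_one_and_le_one {j k : β} (hjk : j ≠ k) :
    #{f : α → β | #({a | f a = j} : Finset α) ≤ 1 ∧ #({a | f a = k} : Finset α) ≤ 1} ≤
      (card β - 2) ^ card α + 2 * card α * (card β - 2) ^ (card α - 1) +
        card α ^ 2 * (card β - 2) ^ (card α - 2) := by
  rw [card_eq_sum_card_fiberwise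
    (f := fun f => (({a | f a = j} : Finset α), ({a | f a = k} : Finset α)))
    (t := ({A | #A ≤ 1} : Finset _) ×ˢ ({B | #B ≤ 1} : Finset _)) (fun f hf => by simpa using hf)]
  have hfiber : ∀ AB ∈ ({A : Finset α | #A ≤ 1} : Finset _) ×ˢ ({B : Finset α | #B ≤ 1} : Finset _),
      #{f ∈ ({f : α → β | #({a | f a = j} : Finset α) ≤ 1 ∧ #({a | f a = k} : Finset α) ≤ 1}
          : Finset _) | (({a | f a = j} : Finset α), ({a | f a = k} : Finset α)) = AB} ≤
        (card β - 2) ^ (card α - #AB.1 - #AB.2) := by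
    intro AB _
    refine (card_le_card fun f hf => ?_).trans
      (card_filter_fiber_eq_and_fiber_eq_le hjk AB.1 AB.2)
    simp only [mem_filter, mem_univ, true_and, Prod.ext_iff] at hf ⊢
    exact hf.2
  refine (sum_le_sum hfiber).trans (le_of_eq ?_)
  rw [sum_product, sum_congr rfl fun A _ =>
      sum_filter_card_le_one fun b => (card β - 2) ^ (card α - #A - b),
    sum_filter_card_le_one fun a =>
      (card β - 2) ^ (card α - a - 0) +
        card α • (card β - 2) ^ (card α - a - 1)]
  simp only [Nat.sub_zero, Nat.sub_sub, smul_eq_mul]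
  ring

end Counting

section Moments

variable {m : ℝ} {n : ℕ}

/-- The expected number of values taken at most once by `n` independent uniform draws from `m`
values. -/
noncomputable def lonelyMean (m : ℝ) (n : ℕ) : ℝ :=
  m * (1 - 1 / m) ^ n + n * (1 - 1 / m) ^ (n - 1)

/-- `m²` times an upper bound for the probability that two given values are both taken at most
once by `n` independent uniform draws from `m` values. -/
noncomputable def lonelyPairBound (m : ℝ) (n : ℕ) : ℝ :=
  m ^ 2 * (1 - 2 / m) ^ n + 2 * n * m * (1 - 2 / m) ^ (n - 1) + n ^ 2 * (1 - 2 / m) ^ (n - 2)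

theorem one_sub_one_div_nonneg (hm : 1 ≤ m) : 0 ≤ 1 - 1 / m :=
  sub_nonneg.2 (div_le_one_of_le₀ hm (by linarith))

theorem one_sub_one_div_le_one (hm : 0 ≤ m) : 1 - 1 / m ≤ 1 :=
  sub_le_self _ (by positivity)

theorem lonelyMean_le_add (hm : 1 ≤ m) : lonelyMean m n ≤ m + n := by
  have hq : ∀ k : ℕ, (1 - 1 / m) ^ k ≤ 1 := fun k =>
    pow_le_one₀ (one_sub_one_div_nonneg hm) (one_sub_one_div_le_one (by linarith))
  unfold lonelyMean
  gcongr
  · exact mul_le_of_le_one_right (by linarith) (hq n)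
  · exact mul_le_of_le_one_right n.cast_nonneg (hq (n - 1))

theorem lonelyMean_le_exp (hm : 1 ≤ m) (hn : 1 ≤ n) (hnm : n ≤ m) :
    lonelyMean m n ≤ (m + n) * exp (-(n / m)) + 1 := by
  obtain ⟨k, rfl⟩ := Nat.exists_eq_add_of_le' hn
  set q := 1 - 1 / m with hq
  have hm0 : 0 < m := by linarith
  have hsplit : lonelyMean m (k + 1) =
      (m + (k + 1 : ℕ)) * q ^ (k + 1) + (k + 1 : ℕ) / m * q ^ k := by
    simp only [lonelyMean, Nat.add_sub_cancel]
    linear_combination (((k + 1 : ℕ) : ℝ) * q ^ k) * hq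
  have hpow : q ^ (k + 1) ≤ exp (-((k + 1 : ℕ) / m)) := by
    calc q ^ (k + 1) ≤ exp (-(1 / m)) ^ (k + 1) := by
          gcongr
          · exact one_sub_one_div_nonneg hm
          · linarith [add_one_le_exp (-(1 / m))]
      _ = exp (-((k + 1 : ℕ) / m)) := by rw [← exp_nat_mul]; ring_nf
  have hrest : (k + 1 : ℕ) / m * q ^ k ≤ 1 :=
    mul_le_one₀ (div_le_one_of_le₀ hnm hm0.le) (pow_nonneg (one_sub_one_div_nonneg hm) k)
      (pow_le_one₀ (one_sub_one_div_nonneg hm) (one_sub_one_div_le_one hm0.le))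
  rw [hsplit]
  gcongr

theorem lonelyMean_le_of_le_mul {ν : ℝ} (hν : 0 < ν) (hkey : (ν + 1) * exp (-1 / ν) = 2 - ν)
    (hn : 1 ≤ n) (hnm : n ≤ m) (hmν : m ≤ ν * n) : lonelyMean m n ≤ (2 - ν) * n + 1 := by
  have hm : (1 : ℝ) ≤ m := le_trans (by exact_mod_cast hn) hnm
  have hexp : exp (-(n / m)) ≤ exp (-1 / ν) := by
    rw [exp_le_exp, neg_div, neg_le_neg_iff, div_le_div_iff₀ hν (by linarith)]
    linarith
  calc lonelyMean m n ≤ (m + n) * exp (-(n / m)) + 1 := lonelyMean_le_exp hm hn hnm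
    _ ≤ (ν + 1) * n * exp (-1 / ν) + 1 := by
      gcongr ?_ * ?_ + 1
      linarith
    _ = (2 - ν) * n + 1 := by rw [mul_right_comm, hkey]

theorem sq_sub_sq_mul_sq_le {q x : ℝ} (hq0 : 0 ≤ q) (hq1 : q ≤ 1) (hmq : m * (1 - q) = 1)
    (hx : 0 ≤ x) (hxm : x ≤ m) : (m * q ^ 2 + x) ^ 2 - q ^ 2 * (m * q + x) ^ 2 ≤ 4 * x := by
  have hx1 : x * (1 - q) ≤ 1 := by
    linarith [mul_le_mul_of_nonneg_right hxm (sub_nonneg.2 hq1)]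
  have hx0 : 0 ≤ x * (1 - q) := mul_nonneg hx (sub_nonneg.2 hq1)
  have hbracket : x * (1 - q) * (1 + q) + 2 * q ^ 2 ≤ 4 := by nlinarith
  calc (m * q ^ 2 + x) ^ 2 - q ^ 2 * (m * q + x) ^ 2
      = x * (x * (1 - q) * (1 + q) + 2 * q ^ 2) := by linear_combination (2 * x * q ^ 2) * hmq
    _ ≤ x * 4 := mul_le_mul_of_nonneg_left hbracket hx
    _ = 4 * x := mul_comm _ _

theorem lonelyPairBound_sub_sq_le (hm : 2 ≤ m) (hn : 2 ≤ n) (hnm : n ≤ m) :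
    lonelyPairBound m n - lonelyMean m n ^ 2 ≤ 4 * n := by
  obtain ⟨k, rfl⟩ := Nat.exists_eq_add_of_le' hn
  set q := 1 - 1 / m with hq
  set r := 1 - 2 / m with hr
  set x : ℝ := ((k + 2 : ℕ) : ℝ) with hx
  have hm0 : 0 < m := by linarith
  have hq0 : 0 ≤ q := one_sub_one_div_nonneg (by linarith)
  have hq1 : q ≤ 1 := one_sub_one_div_le_one hm0.le
  have hr0 : 0 ≤ r := by rw [hr, sub_nonneg, div_le_one hm0]; exact hm
  have hrq : r ≤ q ^ 2 := by
    rw [hr, hq, sub_sq, show 2 / m = 2 * 1 * (1 / m) by ring]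
    linarith [sq_nonneg (1 / m)]
  have hmean : lonelyMean m (k + 2) = q ^ (k + 1) * (m * q + x) := by
    simp only [lonelyMean, ← hq, ← hx, show k + 2 - 1 = k + 1 by omega]
    ring
  have hpair : lonelyPairBound m (k + 2) = r ^ k * (m * r + x) ^ 2 := by
    simp only [lonelyPairBound, ← hr, ← hx, Nat.add_sub_cancel, show k + 2 - 1 = k + 1 by omega]
    ring
  -- `r ≤ q²` reduces the pair term to the same powers of `q` as the square of the mean
  have hpair_le : r ^ k * (m * r + x) ^ 2 ≤ (q ^ k) ^ 2 * (m * q ^ 2 + x) ^ 2 := by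
    rw [← pow_mul, mul_comm k 2, pow_mul]
    gcongr
  have hdefect := sq_sub_sq_mul_sq_le hq0 hq1 (by rw [hq]; field_simp; ring) (by positivity) hnm
  have hqk : (q ^ k) ^ 2 ≤ 1 := pow_le_one₀ (by positivity) (pow_le_one₀ hq0 hq1)
  rw [hpair, hmean]
  calc r ^ k * (m * r + x) ^ 2 - (q ^ (k + 1) * (m * q + x)) ^ 2
      ≤ (q ^ k) ^ 2 * ((m * q ^ 2 + x) ^ 2 - q ^ 2 * (m * q + x) ^ 2) := by
        linear_combination hpair_le
    _ ≤ (q ^ k) ^ 2 * (4 * x) := by gcongr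
    _ ≤ 4 * x := mul_le_of_le_one_left (by positivity) hqk

theorem lonelyMean_add_lonelyPairBound_sub_sq_le (hn : 2 ≤ n) (hnm : n ≤ m) (hm : m ≤ 2 * n) :
    lonelyMean m n + lonelyPairBound m n - lonelyMean m n ^ 2 ≤ 7 * n := by
  have hn' : (2 : ℝ) ≤ n := by exact_mod_cast hn
  linarith [lonelyMean_le_add (n := n) (by linarith : 1 ≤ m),
    lonelyPairBound_sub_sq_le (by linarith) hn hnm]

end Moments

section Lonely

variable {α β : Type*} [Fintype α] [DecidableEq α] [Fintype β] [DecidableEq β]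

def lonelyCount (f : α → β) : ℕ := #{b | #({a | f a = b} : Finset α) ≤ 1}

theorem sum_lonelyCount :
    ∑ f : α → β, lonelyCount f =
      card β * ((card β - 1) ^ card α + card α * (card β - 1) ^ (card α - 1)) := by
  simp_rw [lonelyCount, card_filter]
  rw [sum_comm]
  simp_rw [← card_filter, card_filter_card_fiber_le_one]
  simp

theorem sum_lonelyCount_sq_le :
    ∑ f : α → β, lonelyCount f ^ 2 ≤
      card β * ((card β - 1) ^ card α + card α * (card β - 1) ^ (card α - 1) +
        card β * ((card β - 2) ^ card α + 2 * card α * (card β - 2) ^ (card α - 1) +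
          card α ^ 2 * (card β - 2) ^ (card α - 2))) := by
  have hsq : ∀ f : α → β, lonelyCount f ^ 2 = ∑ b, ∑ c,
      if #({a | f a = b} : Finset α) ≤ 1 ∧ #({a | f a = c} : Finset α) ≤ 1 then 1 else 0 := by
    intro f
    simp_rw [lonelyCount, card_filter, sq, sum_mul_sum, ite_zero_mul_ite_zero, mul_one]
  simp_rw [hsq]
  rw [sum_comm]
  refine (sum_le_sum fun b _ => ?_).trans (by rw [sum_const, card_univ, smul_eq_mul])
  rw [sum_comm, ← add_sum_erase _ _ (mem_univ b)]
  simp_rw [← card_filter, and_self, card_filter_card_fiber_le_one]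
  gcongr
  refine (sum_le_card_nsmul _ _ _ fun c hc => card_filter_card_fiber_le_one_and_le_one
    (Ne.symm (ne_of_mem_erase hc))).trans ?_
  rw [smul_eq_mul]
  gcongr
  exact (card_erase_le).trans (by simp)

theorem sum_cast_lonelyCount_eq (hα : 1 ≤ card α) (hβ : 1 ≤ card β) :
    ∑ f : α → β, (lonelyCount f : ℝ) = (card β : ℝ) ^ card α * lonelyMean (card β) (card α) := by
  have h := congrArg (Nat.cast (R := ℝ)) (sum_lonelyCount (α := α) (β := β))
  push_cast [hβ] at h
  rw [h, lonelyMean]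
  obtain ⟨k, hk⟩ := Nat.exists_eq_add_of_le' hα
  have hm : (card β : ℝ) ≠ 0 := by positivity
  rw [hk, one_sub_div hm, div_pow, div_pow, Nat.add_sub_cancel]
  field_simp
  push_cast
  ring

theorem sum_cast_lonelyCount_sq_le (hα : 2 ≤ card α) (hβ : 2 ≤ card β) :
    ∑ f : α → β, (lonelyCount f : ℝ) ^ 2 ≤
      (card β : ℝ) ^ card α *
        (lonelyMean (card β) (card α) + lonelyPairBound (card β) (card α)) := by
  have h := Nat.cast_le (α := ℝ).2 (sum_lonelyCount_sq_le (α := α) (β := β))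
  push_cast [hβ, show 1 ≤ card β by omega] at h
  refine h.trans (le_of_eq ?_)
  rw [lonelyMean, lonelyPairBound]
  obtain ⟨k, hk⟩ := Nat.exists_eq_add_of_le' hα
  have hm : (card β : ℝ) ≠ 0 := by positivity
  rw [hk, one_sub_div hm, one_sub_div hm, div_pow, div_pow, div_pow, div_pow, div_pow,
    show k + 2 - 1 = k + 1 by omega, Nat.add_sub_cancel]
  field_simp
  push_cast
  ring

end Lonely

theorem lonelyCount_add_repeatCount {n m : ℕ} (z : Fin n → Fin m) :
    lonelyCount z + repeatCount z = m := by
  conv_rhs => rw [← Fintype.card_fin m, ← card_univ, ← card_filter_add_card_filter_not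
    (p := fun j : Fin m => #({i | z i = j} : Finset (Fin n)) ≤ 1)]
  simp [lonelyCount, repeatCount, not_le]

theorem card_mul_sq_le_sum_sub_sq {ι : Type*} [Fintype ι] (g : ι → ℝ) (s : Finset ι) {μ t : ℝ}
    (ht : 0 ≤ t) (hs : ∀ x ∈ s, μ + t ≤ g x) : #s * t ^ 2 ≤ ∑ x, (g x - μ) ^ 2 :=
  calc (#s : ℝ) * t ^ 2 = ∑ x ∈ s, t ^ 2 := by rw [sum_const, nsmul_eq_mul]
    _ ≤ ∑ x ∈ s, (g x - μ) ^ 2 :=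
      sum_le_sum fun x hx => pow_le_pow_left₀ ht (by linarith [hs x hx]) 2
    _ ≤ ∑ x, (g x - μ) ^ 2 :=
      sum_le_sum_of_subset_of_nonneg (subset_univ s) fun _ _ _ => sq_nonneg _

theorem sum_sub_sq_eq_of_sum_eq {ι : Type*} (s : Finset ι) (g : ι → ℝ) {μ : ℝ}
    (h : ∑ x ∈ s, g x = #s * μ) : ∑ x ∈ s, (g x - μ) ^ 2 = ∑ x ∈ s, g x ^ 2 - #s * μ ^ 2 := by
  simp_rw [sub_sq, sum_add_distrib, sum_sub_distrib, ← sum_mul, ← mul_sum, h, sum_const,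
    nsmul_eq_mul]
  ring

theorem measure_mem_finset_eq_card_mul {Ω α β : Type*} [MeasurableSpace Ω] [Fintype α]
    [MeasurableSpace β] [MeasurableSingletonClass β] {P : Measure Ω} {Z : α → Ω → β}
    (hZ : ∀ i, Measurable (Z i)) (hind : iIndepFun Z P) {c : ENNReal}
    (hc : ∀ i b, P {ω | Z i ω = b} = c) (s : Finset (α → β)) :
    P {ω | (fun i => Z i ω) ∈ s} = #s * c ^ card α := by
  have hfiber : ∀ z : α → β, (fun ω i => Z i ω) ⁻¹' {z} = ⋂ i, Z i ⁻¹' {z i} := by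
    intro z; ext ω; simp [funext_iff]
  have hpoint : ∀ z : α → β, P ((fun ω i => Z i ω) ⁻¹' {z}) = c ^ card α := by
    intro z
    rw [hfiber, hind.meas_iInter fun i => ⟨{z i}, measurableSet_singleton _, rfl⟩]
    simp [Set.preimage, hc]
  rw [show {ω | (fun i => Z i ω) ∈ s} = (fun ω i => Z i ω) ⁻¹' ↑s from rfl,
    ← sum_measure_preimage_singleton s fun z _ => hfiber z ▸
      MeasurableSet.iInter fun i => hZ i (measurableSet_singleton _)]
  simp [hpoint]

theorem card_filter_repeatCount_le {ν ε : ℝ} (hν : 0 < ν)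
    (hkey : (ν + 1) * exp (-1 / ν) = 2 - ν) {n m : ℕ} (hn : 2 ≤ n) (hnm : n ≤ m)
    (hm : (m : ℝ) ≤ (ν - ε) * n) (hεn : 2 ≤ ε * n) :
    (#{z : Fin n → Fin m | (repeatCount z : ℤ) ≤ 2 * ((m : ℤ) - (n : ℤ))} : ℝ) ≤
      28 / ε ^ 2 / n * m ^ n := by
  have hnR : (2 : ℝ) ≤ n := by exact_mod_cast hn
  have hnmR : (n : ℝ) ≤ m := by exact_mod_cast hnm
  have hν2 : ν < 2 := by linarith [mul_pos (by linarith : 0 < ν + 1) (exp_pos (-1 / ν))]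
  have hcard : (#(univ : Finset (Fin n → Fin m)) : ℝ) = (m : ℝ) ^ n := by simp
  set μ := lonelyMean m n
  have hsum : ∑ z : Fin n → Fin m, (lonelyCount z : ℝ) = #(univ : Finset (Fin n → Fin m)) * μ := by
    rw [hcard, sum_cast_lonelyCount_eq (by simp; omega) (by simp; omega)]
    simp only [Fintype.card_fin, μ]
  have hsq : ∑ z : Fin n → Fin m, (lonelyCount z : ℝ) ^ 2 ≤
      (m : ℝ) ^ n * (μ + lonelyPairBound m n) := by
    simpa using sum_cast_lonelyCount_sq_le (α := Fin n) (β := Fin m) (by simpa)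
      (by simpa using hn.trans hnm)
  have hmean : μ ≤ (2 - ν) * n + 1 :=
    lonelyMean_le_of_le_mul hν hkey (by omega) hnmR (by linarith)
  have hvar : μ + lonelyPairBound m n - μ ^ 2 ≤ 7 * n :=
    lonelyMean_add_lonelyPairBound_sub_sq_le hn hnmR (by nlinarith)
  have hbad : ∀ z ∈ ({z : Fin n → Fin m | (repeatCount z : ℤ) ≤ 2 * ((m : ℤ) - (n : ℤ))} :
      Finset _), μ + ε * n / 2 ≤ lonelyCount z := by
    intro z hz
    have h := lonelyCount_add_repeatCount z
    simp only [mem_filter, mem_univ, true_and] at hz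
    have : (2 * n - m : ℝ) ≤ lonelyCount z := by
      exact_mod_cast (show (2 * n - m : ℤ) ≤ lonelyCount z by omega)
    linarith
  have hcheb : (#{z : Fin n → Fin m | (repeatCount z : ℤ) ≤ 2 * ((m : ℤ) - (n : ℤ))} : ℝ) *
      (ε * n / 2) ^ 2 ≤ 7 * n * m ^ n :=
    calc _ ≤ ∑ z : Fin n → Fin m, ((lonelyCount z : ℝ) - μ) ^ 2 :=
          card_mul_sq_le_sum_sub_sq _ _ (by positivity) hbad
      _ = ∑ z : Fin n → Fin m, (lonelyCount z : ℝ) ^ 2 - (m : ℝ) ^ n * μ ^ 2 := by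
          rw [sum_sub_sq_eq_of_sum_eq _ _ hsum, hcard]
      _ ≤ 7 * n * m ^ n := by nlinarith [pow_pos (show (0 : ℝ) < m by linarith) n]
  rwa [show 28 / ε ^ 2 / n * (m : ℝ) ^ n = 7 * n * m ^ n / (ε * n / 2) ^ 2 by
    field_simp; ring, le_div_iff₀ (by positivity)]

theorem natCast_mul_inv_pow_le_ofReal {k m n : ℕ} {c : ℝ} (hm : 0 < m)
    (h : (k : ℝ) ≤ c * m ^ n) : (k : ENNReal) * (m : ENNReal)⁻¹ ^ n ≤ ENNReal.ofReal c := by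
  have hm' : (0 : ℝ) < m := by exact_mod_cast hm
  rw [← ENNReal.ofReal_natCast k, ← ENNReal.ofReal_natCast m, ← ENNReal.ofReal_inv_of_pos hm',
    ← ENNReal.ofReal_pow (by positivity), ← ENNReal.ofReal_mul (by positivity)]
  refine ENNReal.ofReal_le_ofReal ?_
  rwa [inv_pow, ← div_eq_mul_inv, div_le_iff₀ (by positivity)]

theorem repeatCount_small_prob_general (ν : ℝ) (hν : 0 < ν)
    (hνeq : ν * (1 + (1 + 1 / ν) * Real.exp (-1 / ν)) = 2)
    (ε : ℝ) (hε0 : 0 < ε) :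
    ∃ C : ℝ, 0 < C ∧ ∃ N₀ : ℕ, ∀ n : ℕ, N₀ ≤ n → ∀ m : ℕ, (m : ℝ) ≤ (ν - ε) * n →
      ∀ (Ω : Type) (_ : MeasurableSpace Ω) (P : Measure Ω), IsProbabilityMeasure P →
      ∀ (Z : Fin n → Ω → Fin m), (∀ i, Measurable (Z i)) →
      iIndepFun Z P →
      (∀ (i : Fin n) (j : Fin m), P {ω | Z i ω = j} = ((m : ENNReal))⁻¹) →
      P {ω | (repeatCount (fun i => Z i ω) : ℤ) ≤ 2 * ((m : ℤ) - (n : ℤ))} ≤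
        ENNReal.ofReal (C / n) := by
  have hkey : (ν + 1) * exp (-1 / ν) = 2 - ν := by
    rw [← hνeq]; field_simp; ring
  refine ⟨28 / ε ^ 2, by positivity, ⌈2 / ε⌉₊ + 2, fun n hn m hm Ω _ P _ Z hZ hind hunif => ?_⟩
  have hεn : 2 ≤ ε * n := by
    have := (Nat.le_ceil (2 / ε)).trans (Nat.cast_le.2 (show ⌈2 / ε⌉₊ ≤ n by omega))
    rwa [div_le_iff₀ hε0, mul_comm] at this
  rcases lt_or_ge m n with hmn | hnm
  · have hempty : {ω | (repeatCount (fun i => Z i ω) : ℤ) ≤ 2 * ((m : ℤ) - (n : ℤ))} = ∅ :=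
      Set.eq_empty_of_forall_notMem fun ω (hω : (repeatCount _ : ℤ) ≤ _) => by omega
    simp [hempty]
  rw [show {ω | (repeatCount (fun i => Z i ω) : ℤ) ≤ 2 * ((m : ℤ) - (n : ℤ))} =
      {ω | (fun i => Z i ω) ∈ ({z | (repeatCount z : ℤ) ≤ 2 * ((m : ℤ) - (n : ℤ))} : Finset _)} by
    simp, measure_mem_finset_eq_card_mul hZ hind hunif, Fintype.card_fin]
  exact natCast_mul_inv_pow_le_ofReal (by omega)
    (card_filter_repeatCount_le hν hkey (by omega) hnm hm hεn)

/-- Let `ν` be the positive root of `ν(1 + (1 + 1/ν)e^{-1/ν}) = 2` and `ε ∈ (0, ν)`.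
There are constants `C > 0` and `N₀` (depending only on `ε`) such that for all `n ≥ N₀`
and `m ≤ (ν - ε) n`, if `Z 1, ..., Z n` are i.i.d. uniform on a set of `m` elements, then
the probability that the number of repeated values is at most `2(m - n)` is at most `C/n`. -/
theorem repeatCount_small_prob (ν : ℝ) (hν : 0 < ν)
    (hνeq : ν * (1 + (1 + 1 / ν) * Real.exp (-1 / ν)) = 2)
    (ε : ℝ) (hε0 : 0 < ε) (hεν : ε < ν) :
    ∃ C : ℝ, 0 < C ∧ ∃ N₀ : ℕ, ∀ n : ℕ, N₀ ≤ n → ∀ m : ℕ, (m : ℝ) ≤ (ν - ε) * n →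
      ∀ (Ω : Type) (_ : MeasurableSpace Ω) (P : Measure Ω), IsProbabilityMeasure P →
      ∀ (Z : Fin n → Ω → Fin m), (∀ i, Measurable (Z i)) →
      iIndepFun Z P →
      (∀ (i : Fin n) (j : Fin m), P {ω | Z i ω = j} = ((m : ENNReal))⁻¹) →
      P {ω | (repeatCount (fun i => Z i ω) : ℤ) ≤ 2 * ((m : ℤ) - (n : ℤ))} ≤
        ENNReal.ofReal (C / n) :=
  repeatCount_small_prob_general ν hν hνeq ε hε0
end

section
/- The function f(x) = 2 − x(1 + (1 + 1/x)e^{-1/x}) is strictly decreasing on (0, ∞), and the equation ν(1 + (1 + 1/ν)e^{-1/ν}) = 2 has a unique positive solution ν, which satisfies ν ≥ 1.1256. -/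
private noncomputable def gfun (x : ℝ) : ℝ := x * (1 + (1 + 1 / x) * Real.exp (-1 / x))

private lemma gfun_eq {x : ℝ} (hx : 0 < x) :
    gfun x = x + (x + 1) * Real.exp (-1 / x) := by
  unfold gfun
  field_simp

private lemma gfun_mono : StrictMonoOn gfun (Set.Ioi (0 : ℝ)) := by
  intro a ha b hb hab
  simp only [Set.mem_Ioi] at ha hb
  rw [gfun_eq ha, gfun_eq hb]
  have h1 : Real.exp (-1 / a) < Real.exp (-1 / b) := by
    apply Real.exp_lt_exp.mpr
    rw [neg_div, neg_div, neg_lt_neg_iff]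
    exact one_div_lt_one_div_of_lt ha hab
  have h2 : (0 : ℝ) < Real.exp (-1 / a) := Real.exp_pos _
  nlinarith

private lemma gfun_continuousOn : ContinuousOn gfun (Set.Icc (1.1256 : ℝ) 2) := by
  apply ContinuousOn.mul continuousOn_id
  apply ContinuousOn.add continuousOn_const
  apply ContinuousOn.mul
  · apply ContinuousOn.add continuousOn_const
    exact continuousOn_const.div continuousOn_id (fun x hx => by
      simp only [Set.mem_Icc] at hx; intro h; norm_num [h] at hx)
  · apply Real.continuous_exp.comp_continuousOn
    exact (continuousOn_const.div continuousOn_id (fun x hx => by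
      simp only [Set.mem_Icc] at hx; intro h; norm_num [h] at hx))

private lemma gfun_lb : gfun 1.1256 ≤ 2 := by
  have hx : (0:ℝ) < 1.1256 := by norm_num
  rw [gfun_eq hx]
  have ht : Real.exp (-1 / 1.1256) = (Real.exp (1250 / 1407))⁻¹ := by
    rw [← Real.exp_neg]; norm_num
  have hsum : (∑ i ∈ Finset.range 7, ((1250:ℝ) / 1407) ^ i / (Nat.factorial i)) ≤
      Real.exp (1250 / 1407) := Real.sum_le_exp_of_nonneg (by norm_num) 7
  have hS : (2.4309241 : ℝ) ≤ Real.exp (1250 / 1407) := by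
    refine le_trans ?_ hsum
    simp [Finset.sum_range_succ, Nat.factorial]
    norm_num
  have hEpos : (0:ℝ) < Real.exp (1250 / 1407) := Real.exp_pos _
  have hinv : Real.exp (-1 / 1.1256) ≤ (2.4309241:ℝ)⁻¹ := by
    rw [ht]
    gcongr
  nlinarith [Real.exp_pos (-1 / (1.1256:ℝ))]

/-- The function `f(x) = 2 - x(1 + (1 + 1/x)e^{-1/x})` is strictly decreasing on `(0, ∞)`,
and the equation `ν(1 + (1 + 1/ν)e^{-1/ν}) = 2` has a unique positive solution `ν`,
which satisfies `ν ≥ 1.1256`. -/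
theorem f_strictAnti_and_unique_root :
    StrictAntiOn (fun x : ℝ => 2 - x * (1 + (1 + 1 / x) * Real.exp (-1 / x)))
      (Set.Ioi (0 : ℝ)) ∧
    ∃ ν : ℝ, (0 < ν ∧ ν * (1 + (1 + 1 / ν) * Real.exp (-1 / ν)) = 2 ∧ 1.1256 ≤ ν) ∧
      ∀ ν' : ℝ, 0 < ν' → ν' * (1 + (1 + 1 / ν') * Real.exp (-1 / ν')) = 2 → ν' = ν := by
  have hanti : StrictAntiOn (fun x : ℝ => 2 - gfun x) (Set.Ioi (0 : ℝ)) := by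
    intro a ha b hb hab
    have := gfun_mono ha hb hab
    simp only
    linarith
  refine ⟨hanti, ?_⟩
  -- existence via IVT
  have h2 : gfun 2 ≥ 2 := by
    rw [gfun_eq (by norm_num)]
    nlinarith [Real.exp_pos ((-1:ℝ) / 2)]
  have hle : (1.1256 : ℝ) ≤ 2 := by norm_num
  obtain ⟨ν, hmem, hroot⟩ := intermediate_value_Icc hle gfun_continuousOn
    ⟨gfun_lb, h2⟩
  have hν1 : (1.1256:ℝ) ≤ ν := hmem.1
  have hνpos : 0 < ν := by linarith
  refine ⟨ν, ⟨hνpos, hroot, hν1⟩, ?_⟩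
  intro ν' hν' hroot'
  have : gfun ν' = gfun ν := by rw [hroot]; exact hroot'
  exact gfun_mono.injOn (Set.mem_Ioi.mpr hν') (Set.mem_Ioi.mpr hνpos) this
end

section
/- Let n ≥ 2 and let D be a non-atomic probability distribution supported on [0,1] with mean μ and variance Var(D). Let X_1, ..., X_n be i.i.d. random variables drawn from D (the disutilities of a single chore for n agents), and define μ* = E[X_1 · 1{X_1 = min(X_1,...,X_n)}] and μ' = E[X_1 · 1{X_2 = min(X_1,...,X_n)}]. Then μ* ≤ (μ − Var(D))/n and μ' ≥ μ/n. -/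
open MeasureTheory ProbabilityTheory

/-!
The law of `(X 0, …, X (n-1))` is the product measure `D^n`, which is invariant under permuting
coordinates; hence `E[X k; X j is the minimum]` only depends on whether `j = k`. Since `D` has no
atoms, almost surely exactly one coordinate is the minimum. Summing over the minimizer `j`,
`n μ* = E[min X] ≤ E[min (X 0) (X 1)] ≤ E[(X 0 + X 1 - (X 0 - X 1)²) / 2] = μ - Var D`,
as `|a - b| ≥ (a - b)²` on `[0,1]`. Likewise `μ = E[X 0] = ∑ j, E[X 0; X j is the minimum]`, and
each summand is at most `μ'`: for `j = 0` because `X 0 ≤ X 1` on that event and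
`E[X 1; X 0 is the minimum] = μ'` by symmetry.
-/

lemma MeasureTheory.Measure.prod_diagonal_eq_zero {α : Type*} [MeasurableSpace α]
    [MeasurableEq α] (μ ν : Measure α) [SFinite ν] [NullSingletonClass ν] :
    μ.prod ν (Set.diagonal α) = 0 := by
  rw [Measure.prod_apply measurableSet_diagonal]
  have hfiber (a : α) : Prod.mk a ⁻¹' Set.diagonal α = {a} := by ext; simp [eq_comm]
  simp [hfiber]

section Pi

variable {ι : Type*} [Fintype ι] {α : Type*} [MeasurableSpace α] (μ : Measure α)

lemma map_eval_prod_eval_pi [IsProbabilityMeasure μ] {i j : ι} (hij : i ≠ j) :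
    (Measure.pi fun _ : ι => μ).map (fun x => (x i, x j)) = μ.prod μ := by
  have hind := (iIndepFun_pi (μ := fun _ : ι => μ) (X := fun _ => id)
    fun _ => aemeasurable_id).indepFun hij
  rw [(indepFun_iff_map_prod_eq_prod_map_map (measurable_pi_apply i).aemeasurable
    (measurable_pi_apply j).aemeasurable).1 hind, (measurePreserving_eval _ i).map_eq,
    (measurePreserving_eval _ j).map_eq]

lemma ae_injective_pi [MeasurableEq α] [IsProbabilityMeasure μ] [NullSingletonClass μ] :
    ∀ᵐ x ∂(Measure.pi fun _ : ι => μ), Function.Injective x := by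
  simp only [Function.Injective, ae_all_iff]
  intro i j
  rcases eq_or_ne i j with rfl | hij
  · exact .of_forall fun _ _ => rfl
  have hnull : (Measure.pi fun _ : ι => μ) ((fun x => (x i, x j)) ⁻¹' Set.diagonal α) = 0 := by
    rw [← Measure.map_apply (by fun_prop) measurableSet_diagonal, map_eval_prod_eval_pi μ hij,
      Measure.prod_diagonal_eq_zero]
  filter_upwards [measure_eq_zero_iff_ae_notMem.1 hnull] with x hx h
  exact absurd h hx

end Pi

section MinCoordinate

variable {ι : Type*}

def minSet (j : ι) : Set (ι → ℝ) := {x | ∀ i, x j ≤ x i}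

lemma measurableSet_minSet [Countable ι] (j : ι) : MeasurableSet (minSet j) := by
  simp only [minSet, Set.ofPred_forall]
  exact .iInter fun i => measurableSet_le (measurable_pi_apply j) (measurable_pi_apply i)

lemma exists_mem_minSet [Finite ι] [Nonempty ι] (x : ι → ℝ) : ∃ j, x ∈ minSet j :=
  Finite.exists_min x

lemma sum_indicator_minSet_of_injective [Fintype ι] {x : ι → ℝ} (hx : Function.Injective x)
    {j₀ : ι} (hj₀ : x ∈ minSet j₀) (f : ι → (ι → ℝ) → ℝ) :
    ∑ j, (minSet j).indicator (f j) x = f j₀ x := by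
  refine (Fintype.sum_eq_single j₀ fun j hj => Set.indicator_of_notMem (fun hxj => hj ?_) _).trans
    (Set.indicator_of_mem hj₀ _)
  exact hx (le_antisymm (hxj j₀) (hj₀ j))

lemma indicator_minSet_apply_self_le (j k : ι) (x : ι → ℝ) :
    (minSet j).indicator (fun y => y j) x ≤ (minSet j).indicator (fun y => y k) x := by
  by_cases hx : x ∈ minSet j
  · simpa [Set.indicator_of_mem hx] using hx k
  · simp [Set.indicator_of_notMem hx]

lemma indicator_minSet_perm (σ : Equiv.Perm ι) (j k : ι) (x : ι → ℝ) :
    (minSet (σ j)).indicator (fun y => y (σ k)) (MeasurableEquiv.piCongrLeft (fun _ => ℝ) σ x)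
      = (minSet j).indicator (fun y => y k) x := by
  have hσ (i : ι) : MeasurableEquiv.piCongrLeft (fun _ => ℝ) σ x (σ i) = x i :=
    MeasurableEquiv.piCongrLeft_apply_apply (β := fun _ => ℝ) σ x i
  have hmem : MeasurableEquiv.piCongrLeft (fun _ => ℝ) σ x ∈ minSet (σ j) ↔ x ∈ minSet j := by
    simp only [minSet, Set.mem_ofPred_eq, hσ]
    exact σ.forall_congr_right.symm.trans (by simp only [hσ])
  by_cases hx : x ∈ minSet j
  · rw [Set.indicator_of_mem hx, Set.indicator_of_mem (hmem.2 hx), hσ]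
  · rw [Set.indicator_of_notMem hx, Set.indicator_of_notMem (mt hmem.1 hx)]

end MinCoordinate

lemma le_half_add_sub_sq {m a b : ℝ} (ha : a ∈ Set.Icc 0 1) (hb : b ∈ Set.Icc 0 1) (hma : m ≤ a)
    (hmb : m ≤ b) : m ≤ (a + b - (a - b) ^ 2) / 2 := by
  obtain ⟨ha0, ha1⟩ := ha
  obtain ⟨hb0, hb1⟩ := hb
  nlinarith [mul_nonneg (sub_nonneg.2 hma) (by linarith : (0 : ℝ) ≤ 1 - (a - b)),
    mul_nonneg (sub_nonneg.2 hmb) (by linarith : (0 : ℝ) ≤ 1 - (b - a))]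

section Moments

variable {ι : Type*} [Fintype ι] (D : Measure ℝ) [IsProbabilityMeasure D]

lemma integral_eval_pi (k : ι) : ∫ x, x k ∂(Measure.pi fun _ : ι => D) = ∫ a, a ∂D := by
  have h := measurePreserving_eval (fun _ : ι => D) k
  conv_rhs => rw [← h.map_eq]
  exact (integral_map h.measurable.aemeasurable aestronglyMeasurable_id).symm

lemma integral_sq_sub_eval_pi (hD : MemLp id 2 D) {i k : ι} (hik : i ≠ k) :
    ∫ x, (x i - x k) ^ 2 ∂(Measure.pi fun _ : ι => D) = 2 * Var[id; D] := by
  set ν := Measure.pi fun _ : ι => D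
  have hX (j : ι) : MemLp (fun x : ι → ℝ => x j) 2 ν :=
    hD.comp_measurePreserving (measurePreserving_eval (fun _ : ι => D) j)
  have hVar (j : ι) : Var[fun x : ι → ℝ => x j; ν] = Var[id; D] :=
    (measurePreserving_eval (fun _ : ι => D) j).variance_fun_comp aemeasurable_id
  have hind : IndepFun (fun x : ι → ℝ => x i) (fun x => x k) ν :=
    (iIndepFun_pi (μ := fun _ : ι => D) (X := fun _ => id) fun _ => aemeasurable_id).indepFun hik
  have hmean : ∫ x, (x i - x k) ∂ν = 0 := by
    rw [integral_sub ((hX i).integrable one_le_two) ((hX k).integrable one_le_two),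
      integral_eval_pi, integral_eval_pi, sub_self]
  calc ∫ x, (x i - x k) ^ 2 ∂ν = Var[fun x => x i - x k; ν] := by
        rw [variance_eq_integral (by fun_prop), hmean]
        simp
    _ = 2 * Var[id; D] := by
        rw [variance_fun_sub (hX i) (hX k), hind.covariance_eq_zero (hX i) (hX k), hVar, hVar]
        ring

end Moments

section CostWhenMin

variable {ι : Type*} [Fintype ι] (D : Measure ℝ)

noncomputable def costWhenMin (j k : ι) : ℝ :=
  ∫ x, (minSet j).indicator (fun y => y k) x ∂(Measure.pi fun _ : ι => D)

lemma costWhenMin_perm [SigmaFinite D] (σ : Equiv.Perm ι) (j k : ι) :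
    costWhenMin D (σ j) (σ k) = costWhenMin D j k := by
  rw [costWhenMin, ← (measurePreserving_piCongrLeft (fun _ => D) σ).integral_comp']
  simp only [indicator_minSet_perm]
  rfl

lemma costWhenMin_self_eq [SigmaFinite D] (i j : ι) :
    costWhenMin D i i = costWhenMin D j j := by
  classical
  simpa using (costWhenMin_perm D (Equiv.swap i j) i i).symm

variable [IsProbabilityMeasure D]

lemma integrable_indicator_minSet (hD : Integrable id D) (j k : ι) :
    Integrable ((minSet j).indicator fun y => y k) (Measure.pi fun _ : ι => D) :=
  ((measurePreserving_eval (fun _ : ι => D) k).integrable_comp_of_integrable hD).indicator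
    (measurableSet_minSet j)

lemma costWhenMin_le_of_ne (hD : Integrable id D) {i k : ι} (hik : i ≠ k) (j : ι) :
    costWhenMin D j k ≤ costWhenMin D i k := by
  classical
  rcases eq_or_ne j k with rfl | hjk
  · calc costWhenMin D j j ≤ costWhenMin D j i :=
          integral_mono (integrable_indicator_minSet D hD j j)
            (integrable_indicator_minSet D hD j i) (indicator_minSet_apply_self_le j i)
      _ = costWhenMin D i j := by
          simpa using (costWhenMin_perm D (Equiv.swap j i) j i).symm
  · simpa [Equiv.swap_apply_of_ne_of_ne hjk.symm hik.symm] using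
      (costWhenMin_perm D (Equiv.swap j i) j k).ge

lemma sum_costWhenMin [NullSingletonClass D] (hD : Integrable id D) (k : ι) :
    ∑ j, costWhenMin D j k = ∫ a, a ∂D := by
  have : Nonempty ι := ⟨k⟩
  rw [← integral_eval_pi D k]
  simp only [costWhenMin]
  rw [← integral_finsetSum _ fun j _ => integrable_indicator_minSet D hD j k]
  refine integral_congr_ae ?_
  filter_upwards [ae_injective_pi D] with x hx
  obtain ⟨j₀, hj₀⟩ := exists_mem_minSet x
  exact sum_indicator_minSet_of_injective hx hj₀ _

lemma sum_costWhenMin_self_le [NullSingletonClass D] (hD : ∀ᵐ a ∂D, a ∈ Set.Icc 0 1) {i k : ι}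
    (hik : i ≠ k) : ∑ j : ι, costWhenMin D j j ≤ ∫ a, a ∂D - Var[id; D] := by
  have : Nonempty ι := ⟨i⟩
  set ν := Measure.pi fun _ : ι => D
  have hmem : MemLp id 2 D := memLp_of_bounded hD aestronglyMeasurable_id 2
  have hX (j : ι) : MemLp (fun x : ι → ℝ => x j) 2 ν :=
    hmem.comp_measurePreserving (measurePreserving_eval (fun _ : ι => D) j)
  have hsum : Integrable (fun x : ι → ℝ => x i + x k) ν :=
    ((hX i).integrable one_le_two).add ((hX k).integrable one_le_two)
  have hsq : Integrable (fun x : ι → ℝ => (x i - x k) ^ 2) ν := ((hX i).sub (hX k)).integrable_sq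
  have hbound : ∀ᵐ x ∂ν, ∀ j, x j ∈ Set.Icc (0 : ℝ) 1 :=
    ae_all_iff.2 fun j => Measure.tendsto_eval_ae_ae.eventually hD
  have hind (j : ι) := integrable_indicator_minSet D (hmem.integrable one_le_two) j j
  calc ∑ j, costWhenMin D j j = ∫ x, ∑ j, (minSet j).indicator (fun y => y j) x ∂ν :=
        (integral_finsetSum _ fun j _ => hind j).symm
    _ ≤ ∫ x, (x i + x k - (x i - x k) ^ 2) / 2 ∂ν := by
        refine integral_mono_ae (integrable_finsetSum _ fun j _ => hind j)
          ((hsum.sub hsq).div_const 2) ?_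
        filter_upwards [ae_injective_pi D, hbound] with x hinj hx
        obtain ⟨j₀, hj₀⟩ := exists_mem_minSet x
        rw [sum_indicator_minSet_of_injective hinj hj₀]
        exact le_half_add_sub_sq (hx i) (hx k) (hj₀ i) (hj₀ k)
    _ = ∫ a, a ∂D - Var[id; D] := by
        rw [integral_div, integral_sub hsum hsq,
          integral_add ((hX i).integrable one_le_two) ((hX k).integrable one_le_two),
          integral_eval_pi, integral_eval_pi, integral_sq_sub_eval_pi D hmem hik]
        ring

end CostWhenMin

/-- Let `X 0, ..., X (n-1)` be i.i.d. draws from a non-atomic distribution `D` on `[0,1]`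
with mean `μ` and variance `V`. Let `μstar` be the expectation of `X 0` on the event that
`X 0` is the minimum, and `μ'` the expectation of `X 0` on the event that `X 1` is the
minimum. Then `μstar ≤ (μ - V)/n` and `μ' ≥ μ/n`. -/
theorem min_cost_expectations (n : ℕ) (hn : 2 ≤ n)
    (D : Measure ℝ) [IsProbabilityMeasure D]
    (hatom : ∀ x : ℝ, D {x} = 0) (hsupp : D (Set.Icc (0 : ℝ) 1)ᶜ = 0)
    {Ω : Type*} [MeasurableSpace Ω] (P : Measure Ω) [IsProbabilityMeasure P]
    (X : Fin n → Ω → ℝ) (hmeas : ∀ i, Measurable (X i))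
    (hindep : iIndepFun X P)
    (hdist : ∀ i, Measure.map (X i) P = D)
    (μ V μstar μ' : ℝ)
    (hμ : μ = ∫ x, x ∂D)
    (hV : V = ∫ x, (x - μ) ^ 2 ∂D)
    (hμstar : μstar = ∫ ω,
      ({ω | ∀ i, X ⟨0, by omega⟩ ω ≤ X i ω}.indicator (fun ω => X ⟨0, by omega⟩ ω)) ω ∂P)
    (hμ' : μ' = ∫ ω,
      ({ω | ∀ i, X ⟨1, by omega⟩ ω ≤ X i ω}.indicator (fun ω => X ⟨0, by omega⟩ ω)) ω ∂P) :
    μstar ≤ (μ - V) / n ∧ μ / n ≤ μ' := by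
  set i₀ : Fin n := ⟨0, by omega⟩
  set i₁ : Fin n := ⟨1, by omega⟩
  have hne : i₁ ≠ i₀ := by simp [i₀, i₁, Fin.ext_iff]
  have : NullSingletonClass D := ⟨hatom⟩
  have hD : ∀ᵐ a ∂D, a ∈ Set.Icc (0 : ℝ) 1 := mem_ae_iff.2 hsupp
  have hint : Integrable id D := (memLp_of_bounded hD aestronglyMeasurable_id 1).integrable le_rfl
  have hlaw : P.map (fun ω i => X i ω) = Measure.pi fun _ => D := by
    rw [(iIndepFun_iff_map_fun_eq_pi_map fun i => (hmeas i).aemeasurable).1 hindep]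
    simp only [hdist]
  have hcost (j : Fin n) : ∫ ω, ({ω | ∀ i, X j ω ≤ X i ω}.indicator (fun ω => X i₀ ω)) ω ∂P
      = costWhenMin D j i₀ := by
    rw [costWhenMin, ← hlaw, integral_map (measurable_pi_lambda _ hmeas).aemeasurable
      ((measurable_pi_apply i₀).indicator (measurableSet_minSet j)).aestronglyMeasurable]
    rfl
  have hVar : V = Var[id; D] := by rw [hV, hμ, variance_eq_integral aemeasurable_id]; rfl
  have hn0 : (0 : ℝ) < n := by positivity
  rw [hμstar, hμ', hcost, hcost, hVar, hμ, le_div_iff₀ hn0, div_le_iff₀ hn0]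
  constructor
  · calc costWhenMin D i₀ i₀ * n = ∑ j, costWhenMin D j j := by
          rw [Finset.sum_congr rfl fun j _ => costWhenMin_self_eq D j i₀]
          simp [mul_comm]
      _ ≤ _ := sum_costWhenMin_self_le D hD hne
  · calc ∫ a, a ∂D = ∑ j, costWhenMin D j i₀ := (sum_costWhenMin D hint i₀).symm
      _ ≤ ∑ _j : Fin n, costWhenMin D i₁ i₀ :=
          Finset.sum_le_sum fun j _ => costWhenMin_le_of_ne D hint hne j
      _ = costWhenMin D i₁ i₀ * n := by simp [mul_comm]
end

section
/- Let c : ℕ → ℝ be any function with c(n) → ∞ as n → ∞, and let G be an Erdős–Rényi random bipartite graph drawn from G(n, n, p) with p = (log n + c(n))/n (where p is truncated to [0,1] if necessary). Then the probability that G contains a perfect matching tends to 1 as n → ∞. -/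
open MeasureTheory Filter

/-- The Erdős–Rényi random bipartite graph `G(n_L, n_R, p)`, as the product Bernoulli
measure on functions assigning to each (left, right) pair whether it is an edge. -/
noncomputable def bipartiteER (nL nR : ℕ) (p : ENNReal) (hp : p ≤ 1) :
    Measure (Fin nL × Fin nR → Bool) :=
  Measure.pi fun _ => (PMF.bernoulli p.toNNReal
    (by simpa using ENNReal.toNNReal_mono ENNReal.one_ne_top hp)).toMeasure

/-!
If `G` has no perfect matching, Hall's condition fails, and a violating set `S` of minimal size
satisfies `|N(S)| = |S| - 1` with every vertex of `N(S)` joined to two vertices of `S`. Passing to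
the complement of `N(S)` on the other side if necessary, `|S| ≤ (n + 1) / 2`. A first-moment bound
over such configurations, with `|S| = m + 1`, is at most `e n e^{-np} (e² (np)² e^{-np/4})^m`, so
the failure probability is `O(n e^{-np})`, the expected number of isolated vertices; for
`np = log n + c n` this is `e^{-c n} → 0`.
-/

open Finset Real Topology

theorem Finset.exists_tight_hall_violator {ι α : Type*} [DecidableEq ι] [DecidableEq α]
    (t : ι → Finset α) {A : Finset ι} (hA : #(A.biUnion t) < #A) :
    ∃ S ⊆ A, #(S.biUnion t) + 1 = #S ∧ ∀ j ∈ S.biUnion t, 1 < #{i ∈ S | j ∈ t i} := by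
  obtain ⟨S, hS, hmin⟩ := exists_min_image {S ∈ A.powerset | #(S.biUnion t) < #S} card
    ⟨A, by simpa using hA⟩
  simp only [mem_filter, mem_powerset] at hS hmin
  obtain ⟨hSA, hSlt⟩ := hS
  have herase : ∀ i ∈ S, #(S.erase i) ≤ #((S.erase i).biUnion t) := fun i hi =>
    not_lt.mp fun hlt => by
      have := hmin _ ⟨(erase_subset i S).trans hSA, hlt⟩
      have := card_erase_lt_of_mem hi
      omega
  obtain ⟨i₀, hi₀⟩ : S.Nonempty := card_pos.mp (by omega)
  have hcard : #(S.biUnion t) + 1 = #S := by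
    have := card_le_card (biUnion_subset_biUnion_of_subset_left t (erase_subset i₀ S))
    have := herase i₀ hi₀
    have := card_erase_of_mem hi₀
    omega
  refine ⟨S, hSA, hcard, fun j hj => ?_⟩
  by_contra! hle
  obtain ⟨i, hi⟩ : {i ∈ S | j ∈ t i}.Nonempty := by
    obtain ⟨i, hiS, hji⟩ := mem_biUnion.mp hj
    exact ⟨i, mem_filter.mpr ⟨hiS, hji⟩⟩
  have hsub : (S.erase i).biUnion t ⊆ (S.biUnion t).erase j := by
    intro j' hj'
    obtain ⟨i', hi', hj't⟩ := mem_biUnion.mp hj'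
    refine mem_erase.mpr ⟨fun hjj => ?_, mem_biUnion.mpr ⟨i', mem_of_mem_erase hi', hj't⟩⟩
    subst hjj
    exact (mem_erase.mp hi').1
      (card_le_one.mp hle i' (mem_filter.mpr ⟨mem_of_mem_erase hi', hj't⟩) i hi)
  have := card_le_card hsub
  have := card_erase_of_mem hj
  have := herase i (mem_filter.mp hi).1
  have := card_erase_of_mem (mem_filter.mp hi).1
  have := card_pos.mpr ⟨j, hj⟩
  omega

structure IsTightHallViolator {α β : Type*} (G : α × β → Bool)
    (S : Finset α) (T : Finset β) : Prop where
  card_add_one : #T + 1 = #S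
  eq_false_of_notMem : ∀ i ∈ S, ∀ j ∉ T, G (i, j) = false
  one_lt_card : ∀ j ∈ T, 1 < #{i ∈ S | G (i, j) = true}

lemma exists_isTightHallViolator {α β : Type*} [Fintype β] [DecidableEq α] [DecidableEq β]
    (G : α × β → Bool) {A : Finset α}
    (hA : #(A.biUnion fun i => {j | G (i, j) = true}) < #A) :
    ∃ S ⊆ A, IsTightHallViolator G S (S.biUnion fun i => {j | G (i, j) = true}) := by
  obtain ⟨S, hSA, hcard, htwo⟩ := exists_tight_hall_violator _ hA
  refine ⟨S, hSA, hcard, fun i hi j hj => ?_, fun j hj => by simpa using htwo j hj⟩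
  by_contra hG
  exact hj (mem_biUnion.mpr ⟨i, hi, by simpa using hG⟩)

lemma exists_isTightHallViolator_of_not_exists_perm {α : Type*} [Fintype α] [DecidableEq α]
    (G : α × α → Bool) (h : ¬∃ σ : Equiv.Perm α, ∀ i, G (i, σ i) = true) :
    ∃ S T, 2 * #S ≤ Fintype.card α + 1 ∧
      (IsTightHallViolator G S T ∨ IsTightHallViolator (G ∘ Prod.swap) S T) := by
  set t : α → Finset α := fun i => {j | G (i, j) = true}
  obtain ⟨A, hA⟩ : ∃ A : Finset α, #(A.biUnion t) < #A := by
    by_contra! hall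
    obtain ⟨f, hf, hft⟩ := (all_card_le_biUnion_card_iff_exists_injective t).mp hall
    exact h ⟨Equiv.ofBijective f hf.bijective_of_finite, fun i => by simpa [t] using hft i⟩
  obtain ⟨S, -, hS⟩ := exists_isTightHallViolator G hA
  by_cases hsmall : 2 * #S ≤ Fintype.card α + 1
  · exact ⟨S, _, hsmall, Or.inl hS⟩
  set T := S.biUnion t
  have hsub : (Tᶜ).biUnion (fun j => {i | (G ∘ Prod.swap) (j, i) = true}) ⊆ Sᶜ := by
    intro i hi
    obtain ⟨j, hj, hij⟩ := mem_biUnion.mp hi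
    refine mem_compl.mpr fun hiS => ?_
    simp_all [hS.eq_false_of_notMem i hiS j (mem_compl.mp hj)]
  have hlt : #((Tᶜ).biUnion (fun j => {i | (G ∘ Prod.swap) (j, i) = true})) < #Tᶜ := by
    have := card_le_card hsub
    have := hS.card_add_one
    rw [card_compl] at *
    have := card_le_univ S
    omega
  obtain ⟨S', hS'T, hS'⟩ := exists_isTightHallViolator (G ∘ Prod.swap) hlt
  refine ⟨S', _, ?_, Or.inr hS'⟩
  have := card_le_card hS'T
  have := hS.card_add_one
  rw [card_compl] at *
  omega

def witnessEdges {α β : Type*} [DecidableEq α] [DecidableEq β] (T : Finset β)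
    (F : T → α × α) : Finset (α × β) :=
  univ.biUnion fun j => {((F j).1, (j : β)), ((F j).2, (j : β))}

section witnessEdges
variable {α β : Type*} [DecidableEq α] [DecidableEq β] {T : Finset β} {F : T → α × α}

lemma snd_mem_of_mem_witnessEdges {q : α × β} (hq : q ∈ witnessEdges T F) : q.2 ∈ T := by
  obtain ⟨j, -, hj⟩ := mem_biUnion.mp hq
  rcases mem_insert.mp hj with rfl | hj
  · exact j.2
  · rw [mem_singleton.mp hj]; exact j.2

lemma card_witnessEdges (hF : ∀ j, (F j).1 ≠ (F j).2) : #(witnessEdges T F) = 2 * #T := by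
  rw [witnessEdges, card_biUnion]
  · simp [hF, mul_comm]
  · intro j _ j' _ hjj'
    have := Subtype.val_injective.ne hjj'
    simp [Function.onFun, this.symm]

lemma setOf_isTightHallViolator_subset [Fintype β] (S : Finset α) :
    {G : α × β → Bool | IsTightHallViolator G S T} ⊆
      ⋃ F ∈ Fintype.piFinset fun _ : T => S.offDiag,
        {G | (∀ q ∈ S ×ˢ Tᶜ, G q = false) ∧ ∀ q ∈ witnessEdges T F, G q = true} := by
  intro G hG
  have : ∀ j : T, ∃ e ∈ S.offDiag, G (e.1, j) = true ∧ G (e.2, j) = true := by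
    intro j
    obtain ⟨i₁, h₁, i₂, h₂, hne⟩ := one_lt_card.mp (hG.one_lt_card j j.2)
    rw [mem_filter] at h₁ h₂
    exact ⟨(i₁, i₂), mem_offDiag.mpr ⟨h₁.1, h₂.1, hne⟩, h₁.2, h₂.2⟩
  choose F hFS hFG using this
  simp only [Set.mem_iUnion]
  refine ⟨F, Fintype.mem_piFinset.mpr hFS, fun q hq => ?_, fun q hq => ?_⟩
  · obtain ⟨hq₁, hq₂⟩ := mem_product.mp hq
    exact hG.eq_false_of_notMem _ hq₁ _ (mem_compl.mp hq₂)
  · obtain ⟨j, -, hj⟩ := mem_biUnion.mp hq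
    rcases mem_insert.mp hj with rfl | hj
    · exact (hFG j).1
    · rw [mem_singleton.mp hj]; exact (hFG j).2

end witnessEdges

/-- The expected number of choices of `S`, `T` with `#S = m + 1`, `#T = m` and of two distinct
neighbours in `S` for every vertex of `T`, such that these `2 m` edges are present and `S × Tᶜ`
carries no edge, in a random graph with edge probability `q`. -/
noncomputable def violatorBound (n m : ℕ) (q : ℝ) : ℝ :=
  n.choose (m + 1) * n.choose m * ((m + 1) * m) ^ m *
    ((1 - q) ^ ((m + 1) * (n - m)) * q ^ (2 * m))

lemma Nat.choose_mul_pow_self_le (n k : ℕ) : (n.choose k : ℝ) * k ^ k ≤ (exp 1 * n) ^ k :=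
  calc (n.choose k : ℝ) * k ^ k ≤ n ^ k / k.factorial * k ^ k := by
        gcongr; exact Nat.choose_le_pow_div k n
    _ = n ^ k * (k ^ k / k.factorial) := by ring
    _ ≤ n ^ k * exp k := by gcongr; exact pow_div_factorial_le_exp _ (Nat.cast_nonneg k) k
    _ = (exp 1 * n) ^ k := by rw [← mul_one (k : ℝ), exp_nat_mul, mul_pow, mul_comm]

lemma choose_mul_choose_mul_pow_le (n m : ℕ) :
    (n.choose (m + 1) : ℝ) * n.choose m * ((m + 1) * m) ^ m ≤ (exp 1 * n) ^ (2 * m + 1) := by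
  have h₁ := Nat.choose_mul_pow_self_le n (m + 1)
  have h₂ := Nat.choose_mul_pow_self_le n m
  push_cast at h₁
  calc (n.choose (m + 1) : ℝ) * n.choose m * ((m + 1) * m) ^ m
        = (n.choose (m + 1) * (m + 1) ^ m) * (n.choose m * m ^ m) := by rw [mul_pow]; ring
    _ ≤ (n.choose (m + 1) * (m + 1) ^ (m + 1)) * (n.choose m * m ^ m) := by
        gcongr
        · exact le_add_of_nonneg_left (Nat.cast_nonneg m)
        · omega
    _ ≤ (exp 1 * n) ^ (m + 1) * (exp 1 * n) ^ m := by gcongr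
    _ = (exp 1 * n) ^ (2 * m + 1) := by ring

section
variable {n m : ℕ} {q : ℝ}

lemma one_sub_pow_le_exp (hq₀ : 0 ≤ q) (hq₁ : q ≤ 1) (hm : 2 * m + 1 ≤ n) :
    (1 - q) ^ ((m + 1) * (n - m)) ≤ exp (-(n * q)) * exp (-(n * q) / 4) ^ m := by
  have hexp : n + m * n / 4 ≤ (((m + 1) * (n - m) : ℕ) : ℝ) := by
    obtain ⟨k, rfl⟩ := Nat.exists_eq_add_of_le hm
    rw [show 2 * m + 1 + k - m = m + 1 + k by omega]
    have hm₂ : (m : ℝ) ≤ m ^ 2 := by exact_mod_cast Nat.le_self_pow two_ne_zero m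
    have hmk : (0 : ℝ) ≤ m * k := by positivity
    push_cast
    nlinarith
  calc (1 - q) ^ ((m + 1) * (n - m)) ≤ exp (-q) ^ ((m + 1) * (n - m)) :=
        pow_le_pow_left₀ (by linarith) (by linarith [add_one_le_exp (-q)]) _
    _ = exp (-(q * (((m + 1) * (n - m) : ℕ) : ℝ))) := by rw [← exp_nat_mul]; ring_nf
    _ ≤ exp (-(q * (n + m * n / 4))) := by gcongr
    _ = exp (-(n * q)) * exp (-(n * q) / 4) ^ m := by rw [← exp_nat_mul, ← exp_add]; ring_nf

lemma violatorBound_le (hq₀ : 0 ≤ q) (hq₁ : q ≤ 1) (hm : 2 * m + 1 ≤ n) :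
    violatorBound n m q
      ≤ exp 1 * n * exp (-(n * q)) * (exp 1 ^ 2 * (n * q) ^ 2 * exp (-(n * q) / 4)) ^ m :=
  calc violatorBound n m q
        ≤ (exp 1 * n) ^ (2 * m + 1) *
            ((exp (-(n * q)) * exp (-(n * q) / 4) ^ m) * q ^ (2 * m)) := by
        unfold violatorBound
        gcongr ?_ * (?_ * _)
        · exact choose_mul_choose_mul_pow_le n m
        · exact one_sub_pow_le_exp hq₀ hq₁ hm
    _ = exp 1 * n * exp (-(n * q)) * (exp 1 ^ 2 * (n * q) ^ 2 * exp (-(n * q) / 4)) ^ m := by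
        ring

lemma two_mul_sum_violatorBound_le (hq₀ : 0 ≤ q) (hq₁ : q ≤ 1)
    (hr : exp 1 ^ 2 * (n * q) ^ 2 * exp (-(n * q) / 4) ≤ 1 / 2) :
    2 * ∑ m ∈ range ((n + 1) / 2), violatorBound n m q
      ≤ 4 * exp 1 * (n * exp (-(n * q))) := by
  calc 2 * ∑ m ∈ range ((n + 1) / 2), violatorBound n m q
        ≤ 2 * ∑ m ∈ range ((n + 1) / 2), exp 1 * n * exp (-(n * q)) * (1 / 2) ^ m := by
        gcongr with m hm
        refine (violatorBound_le hq₀ hq₁ (by have := mem_range.mp hm; omega)).trans ?_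
        gcongr
    _ = 2 * (exp 1 * n * exp (-(n * q))) * ∑ m ∈ range ((n + 1) / 2), (1 / 2 : ℝ) ^ m := by
        rw [← mul_sum]; ring
    _ ≤ 2 * (exp 1 * n * exp (-(n * q))) * 2 := by gcongr; exact sum_geometric_two_le _
    _ = 4 * exp 1 * (n * exp (-(n * q))) := by ring

end

lemma tendsto_sq_mul_exp_neg_div_four :
    Tendsto (fun x : ℝ => exp 1 ^ 2 * x ^ 2 * exp (-x / 4)) atTop (𝓝 0) := by
  have := ((tendsto_pow_mul_exp_neg_atTop_nhds_zero 2).comp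
    (tendsto_id.atTop_div_const (by norm_num : (0 : ℝ) < 4))).const_mul (16 * exp 1 ^ 2)
  rw [mul_zero] at this
  refine this.congr fun x => ?_
  simp only [Function.comp_apply, id, neg_div]
  ring

lemma tendsto_atTop_of_tendsto_mul_exp_neg {L : ℕ → ℝ}
    (h : Tendsto (fun n : ℕ => n * exp (-L n)) atTop (𝓝 0)) : Tendsto L atTop atTop := by
  refine tendsto_atTop_mono' atTop ?_ (tendsto_log_atTop.comp tendsto_natCast_atTop_atTop)
  filter_upwards [h.eventually (eventually_le_nhds one_pos), eventually_ge_atTop 1] with n hn hn₁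
  rw [exp_neg, ← div_eq_mul_inv, div_le_one (exp_pos _)] at hn
  exact (log_le_iff_le_exp (by exact_mod_cast hn₁)).mpr hn

lemma MeasureTheory.Measure.pi_cylinder_bool {ι : Type*} [Fintype ι] (ν : Measure Bool)
    [IsProbabilityMeasure ν] {F E : Finset ι} (hFE : Disjoint F E) :
    Measure.pi (fun _ : ι => ν) {x | (∀ i ∈ F, x i = false) ∧ ∀ i ∈ E, x i = true}
      = ν {false} ^ #F * ν {true} ^ #E := by
  classical
  have hset : {x : ι → Bool | (∀ i ∈ F, x i = false) ∧ ∀ i ∈ E, x i = true}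
      = Set.univ.pi fun i => if i ∈ E then {true} else if i ∈ F then {false} else Set.univ := by
    ext x
    simp only [Set.mem_ofPred_eq, Set.mem_pi, Set.mem_univ, true_implies]
    refine ⟨fun ⟨hF, hE⟩ i => ?_, fun h => ⟨fun i hi => ?_, fun i hi => ?_⟩⟩
    · split_ifs <;> simp [*]
    · simpa [disjoint_left.mp hFE hi, hi] using h i
    · simpa [hi] using h i
  rw [hset, Measure.pi_pi]
  simp only [apply_ite ν, measure_univ]
  rw [prod_ite, prod_const, prod_ite, prod_const, prod_const_one, mul_one, mul_comm,
    filter_filter]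
  congr 3 <;> ext i
  · simpa using fun hi => disjoint_left.mp hFE hi
  · simp

set_option linter.deprecated false in
lemma PMF.bernoulli_toMeasure_singleton {q : NNReal} (hq : q ≤ 1) (b : Bool) :
    (PMF.bernoulli q hq).toMeasure {b} = cond b (q : ENNReal) (1 - q) := by
  rw [PMF.toMeasure_apply_singleton _ _ (measurableSet_singleton _), PMF.bernoulli_apply]
  cases b <;> simp [ENNReal.coe_sub]

namespace BipartiteER

variable {nL nR : ℕ} {p : ENNReal} {hp : p ≤ 1}

instance : IsProbabilityMeasure (bipartiteER nL nR p hp) := by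
  unfold bipartiteER; infer_instance

lemma measure_cylinder {F E : Finset (Fin nL × Fin nR)} (hFE : Disjoint F E) :
    bipartiteER nL nR p hp {G | (∀ q ∈ F, G q = false) ∧ ∀ q ∈ E, G q = true}
      = (1 - p) ^ #F * p ^ #E := by
  have hp' : ((p.toNNReal : NNReal) : ENNReal) = p :=
    ENNReal.coe_toNNReal (ne_top_of_le_ne_top ENNReal.one_ne_top hp)
  rw [bipartiteER, Measure.pi_cylinder_bool _ hFE]
  generalize_proofs hq
  rw [PMF.bernoulli_toMeasure_singleton, PMF.bernoulli_toMeasure_singleton, cond_false,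
    cond_true, hp']

lemma measureReal_cylinder {F E : Finset (Fin nL × Fin nR)} (hFE : Disjoint F E) :
    (bipartiteER nL nR p hp).real {G | (∀ q ∈ F, G q = false) ∧ ∀ q ∈ E, G q = true}
      = (1 - p.toReal) ^ #F * p.toReal ^ #E := by
  rw [measureReal_def, measure_cylinder hFE, ENNReal.toReal_mul, ENNReal.toReal_pow,
    ENNReal.toReal_pow, ENNReal.toReal_sub_of_le hp ENNReal.one_ne_top, ENNReal.toReal_one]

lemma measurePreserving_comp_swap :
    MeasurePreserving (fun G : Fin nL × Fin nR → Bool => G ∘ Prod.swap)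
      (bipartiteER nL nR p hp) (bipartiteER nR nL p hp) :=
  measurePreserving_arrowCongr' _ _ (Equiv.prodComm _ _) (MeasurableEquiv.refl Bool)
    fun _ => MeasurePreserving.id _

variable {n : ℕ}

lemma measureReal_isTightHallViolator_le {S T : Finset (Fin n)} {m : ℕ} (hS : #S = m + 1)
    (hT : #T = m) :
    (bipartiteER n n p hp).real {G | IsTightHallViolator G S T}
      ≤ ((m + 1) * m) ^ m * ((1 - p.toReal) ^ ((m + 1) * (n - m)) * p.toReal ^ (2 * m)) := by
  calc _ ≤ ∑ F ∈ Fintype.piFinset fun _ : T => S.offDiag, (bipartiteER n n p hp).real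
          {G | (∀ q ∈ S ×ˢ Tᶜ, G q = false) ∧ ∀ q ∈ witnessEdges T F, G q = true} :=
        (measureReal_mono (setOf_isTightHallViolator_subset S) (measure_ne_top _ _)).trans
          (measureReal_biUnion_finset_le _ _)
    _ = ∑ F ∈ Fintype.piFinset fun _ : T => S.offDiag,
          (1 - p.toReal) ^ ((m + 1) * (n - m)) * p.toReal ^ (2 * m) := by
        refine sum_congr rfl fun F hF => ?_
        have hFS := Fintype.mem_piFinset.mp hF
        rw [measureReal_cylinder, card_product, card_compl, card_witnessEdges, hS, hT,
          Fintype.card_fin]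
        · exact fun j => (mem_offDiag.mp (hFS j)).2.2
        · exact disjoint_left.mpr fun q hq hq' =>
            (mem_compl.mp (mem_product.mp hq).2) (snd_mem_of_mem_witnessEdges hq')
    _ = _ := by
        rw [sum_const, Fintype.card_piFinset, prod_const, card_univ, Fintype.card_coe,
          offDiag_card, hS, hT, nsmul_eq_mul]
        rw [show (m + 1) * (m + 1) - (m + 1) = (m + 1) * m by
          rw [Nat.mul_add_one, Nat.add_sub_cancel]]
        push_cast
        ring

lemma measureReal_exists_isTightHallViolator_le (m : ℕ) :
    (bipartiteER n n p hp).real {G | ∃ S T, #S = m + 1 ∧ IsTightHallViolator G S T}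
      ≤ violatorBound n m p.toReal := by
  calc _ ≤ ∑ S ∈ powersetCard (m + 1) univ, ∑ T ∈ powersetCard m univ,
          (bipartiteER n n p hp).real {G | IsTightHallViolator G S T} := by
        refine (measureReal_mono ?_ (measure_ne_top _ _)).trans <|
          (measureReal_biUnion_finset_le _ _).trans <|
            sum_le_sum fun S _ => measureReal_biUnion_finset_le _ _
        rintro G ⟨S, T, hS, hG⟩
        have := hG.card_add_one
        simp only [Set.mem_iUnion]
        exact ⟨S, mem_powersetCard_univ.mpr hS, T, mem_powersetCard_univ.mpr (by omega), hG⟩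
    _ ≤ ∑ S ∈ powersetCard (m + 1) univ, ∑ T ∈ powersetCard m (univ : Finset (Fin n)),
          ((m + 1) * m) ^ m * ((1 - p.toReal) ^ ((m + 1) * (n - m)) * p.toReal ^ (2 * m)) :=
        sum_le_sum fun S hS => sum_le_sum fun T hT => measureReal_isTightHallViolator_le
          (mem_powersetCard_univ.mp hS) (mem_powersetCard_univ.mp hT)
    _ = violatorBound n m p.toReal := by
        simp only [sum_const, card_powersetCard, card_univ, Fintype.card_fin, nsmul_eq_mul,
          violatorBound]
        ring

lemma measureReal_not_exists_perm_le :
    (bipartiteER n n p hp).real {G | ¬∃ σ : Equiv.Perm (Fin n), ∀ i, G (i, σ i) = true}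
      ≤ 2 * ∑ m ∈ range ((n + 1) / 2), violatorBound n m p.toReal := by
  set μ := bipartiteER n n p hp
  set V := ⋃ m ∈ range ((n + 1) / 2),
    {G : Fin n × Fin n → Bool | ∃ S T, #S = m + 1 ∧ IsTightHallViolator G S T}
  have hsub : {G | ¬∃ σ : Equiv.Perm (Fin n), ∀ i, G (i, σ i) = true}
      ⊆ V ∪ (fun G => G ∘ Prod.swap) ⁻¹' V := by
    intro G hG
    obtain ⟨S, T, hS, hG⟩ := exists_isTightHallViolator_of_not_exists_perm G hG
    have hT : #T < (n + 1) / 2 := by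
      rcases hG with hG | hG <;>
      · have := hG.card_add_one
        rw [Fintype.card_fin] at hS
        omega
    simp only [V, Set.mem_union, Set.mem_preimage, Set.mem_iUnion, mem_range]
    rcases hG with hG | hG
    · exact .inl ⟨#T, hT, S, T, hG.card_add_one.symm, hG⟩
    · exact .inr ⟨#T, hT, S, T, hG.card_add_one.symm, hG⟩
  calc _ ≤ μ.real V + μ.real ((fun G => G ∘ Prod.swap) ⁻¹' V) :=
        (measureReal_mono hsub (measure_ne_top _ _)).trans (measureReal_union_le _ _)
    _ = 2 * μ.real V := by
        rw [measurePreserving_comp_swap.measureReal_preimage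
          V.toFinite.measurableSet.nullMeasurableSet]
        ring
    _ ≤ _ := by
        gcongr
        exact (measureReal_biUnion_finset_le _ _).trans
          (sum_le_sum fun m _ => measureReal_exists_isTightHallViolator_le m)

theorem tendsto_exists_perm {p : ℕ → ENNReal} (hp : ∀ n, p n ≤ 1)
    (h : Tendsto (fun n : ℕ => n * exp (-(n * (p n).toReal))) atTop (𝓝 0)) :
    Tendsto (fun n => bipartiteER n n (p n) (hp n)
      {G | ∃ σ : Equiv.Perm (Fin n), ∀ i, G (i, σ i) = true}) atTop (𝓝 1) := by
  have hratio : ∀ᶠ n : ℕ in atTop,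
      exp 1 ^ 2 * (n * (p n).toReal) ^ 2 * exp (-(n * (p n).toReal) / 4) ≤ 1 / 2 :=
    (tendsto_sq_mul_exp_neg_div_four.comp (tendsto_atTop_of_tendsto_mul_exp_neg h)).eventually
      (eventually_le_nhds (by norm_num))
  have hfail : Tendsto (fun n => (bipartiteER n n (p n) (hp n)).real
      {G | ¬∃ σ : Equiv.Perm (Fin n), ∀ i, G (i, σ i) = true}) atTop (𝓝 0) := by
    refine squeeze_zero' (.of_forall fun n => measureReal_nonneg) ?_
      (by simpa using h.const_mul (4 * exp 1))
    filter_upwards [hratio] with n hn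
    exact measureReal_not_exists_perm_le.trans (two_mul_sum_violatorBound_le
      ENNReal.toReal_nonneg (by simpa using ENNReal.toReal_mono ENNReal.one_ne_top (hp n)) hn)
  have := ENNReal.tendsto_ofReal (hfail.const_sub 1)
  rw [sub_zero, ENNReal.ofReal_one] at this
  refine this.congr fun n => ?_
  rw [← probReal_compl_eq_one_sub (Set.toFinite _).measurableSet, ofReal_measureReal]
  exact congrArg _ (Set.ext fun _ => not_not)

end BipartiteER

lemma tendsto_mul_exp_neg_mul_ofReal_inf_one {c : ℕ → ℝ} (hc : Tendsto c atTop atTop) :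
    Tendsto (fun n : ℕ => n * exp (-(n * (ENNReal.ofReal ((log n + c n) / n) ⊓ 1).toReal)))
      atTop (𝓝 0) := by
  have hmax : Tendsto (fun n : ℕ => max (exp (-c n)) (n * exp (-n))) atTop (𝓝 0) := by
    have h₁ := tendsto_exp_neg_atTop_nhds_zero.comp hc
    have h₂ := (tendsto_pow_mul_exp_neg_atTop_nhds_zero 1).comp tendsto_natCast_atTop_atTop
    simpa using h₁.max h₂
  refine hmax.congr' ?_
  filter_upwards [hc.eventually_ge_atTop 0, eventually_ge_atTop 1] with n hcn hn
  have hn₀ : (0 : ℝ) < n := by exact_mod_cast hn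
  have hx : 0 ≤ (log n + c n) / n := div_nonneg (by linarith [log_natCast_nonneg n]) hn₀.le
  rw [← ENNReal.ofReal_one, ← ENNReal.ofReal_min, ENNReal.toReal_ofReal (le_min hx zero_le_one),
    mul_min_of_nonneg _ _ hn₀.le, mul_div_cancel₀ _ hn₀.ne', mul_one, ← max_neg_neg,
    exp_monotone.map_max, mul_max_of_nonneg _ _ hn₀.le, neg_add, exp_add, exp_neg (log n),
    exp_log hn₀, mul_inv_cancel_left₀ hn₀.ne']

/-- A random bipartite graph from `G(n, n, p)` with `p = (log n + c n)/n` (truncated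
to at most `1`), where `c n → ∞`, contains a perfect matching with high probability. -/
theorem er_perfect_matching_whp (c : ℕ → ℝ) (hc : Tendsto c atTop atTop) :
    Tendsto
      (fun n =>
        bipartiteER n n (ENNReal.ofReal ((Real.log n + c n) / n) ⊓ 1) inf_le_right
          {G | ∃ σ : Equiv.Perm (Fin n), ∀ i, G (i, σ i) = true})
      atTop (nhds 1) :=
  BipartiteER.tendsto_exists_perm (fun _ => inf_le_right)
    (tendsto_mul_exp_neg_mul_ofReal_inf_one hc)
end

section
/- Let c : ℕ → ℝ be any function with c(n) → ∞ as n → ∞. Let n_L = n_L(n) and n_R = n_R(n) satisfy n/2 ≤ n_L ≤ n and n_R ≤ n, and let G be drawn from G(n_L, n_R, p) with p = 2(log n + c(n))/n (truncated to [0,1] if necessary). Then the probability that G contains a right-saturated 2-matching tends to 1 as n → ∞. -/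
open MeasureTheory Filter

/-- `G` contains a right-saturated 2-matching: each right vertex is matched along an edge
to a left vertex, and every left vertex is matched to at most two right vertices. -/
def HasRightSaturatedTwoMatching {nL nR : ℕ} (G : Fin nL × Fin nR → Bool) : Prop :=
  ∃ g : Fin nR → Fin nL,
    (∀ r, G (g r, r) = true) ∧
    ∀ ℓ : Fin nL, (Finset.univ.filter (fun r => g r = ℓ)).card ≤ 2

/-!
Split the right side into two halves of size at most `⌈n_R / 2⌉ ≤ n_L`: matchings saturating the
two halves together form a right-saturated 2-matching, so by Hall's theorem it suffices to exclude
Hall violators between each half and the left side. A minimal violator `S` satisfies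
`|N(S)| = |S| - 1`, and every vertex of `N(S)` has two neighbours in `S`. If `|S| > n_L / 2 + 1`,
the left vertices outside `N(S)` violate the reverse Hall condition, and a minimal such violator
has the same rigid shape and at most `n_L / 2 + 1` vertices. A union bound over these shapes with
`a` vertices gives at most `θ ^ a`, where `θ = e³ n e^{-L} + 4 e² L² e^{-L/2}` and
`L = log n + c n`; hence the failure probability is `O(θ)`, and `θ → 0`.
-/

open Finset Function Real

section HallObstruction

variable {γ δ : Type*}

/-- The shape of a minimal violator of Hall's condition of deficiency `a - b`. -/
def HasHallObstruction (r : γ → δ → Prop) (a b : ℕ) : Prop :=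
  ∃ X : Finset γ, #X = a ∧ ∃ Y : Finset δ, #Y = b ∧
    (∀ x ∈ X, ∀ y ∉ Y, ¬ r x y) ∧
    ∀ y ∈ Y, ∃ x₁ ∈ X, ∃ x₂ ∈ X, x₁ ≠ x₂ ∧ r x₁ y ∧ r x₂ y

theorem exists_hasHallObstruction [Fintype δ] (r : γ → δ → Prop) [DecidableRel r] {d : ℕ}
    (hd : 1 ≤ d) {X₀ : Finset γ} (hX₀ : #{y | ∃ x ∈ X₀, r x y} + d ≤ #X₀) :
    ∃ a ≤ #X₀, d ≤ a ∧ HasHallObstruction r a (a - d) := by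
  classical
  set N : Finset γ → Finset δ := fun X => {y | ∃ x ∈ X, r x y} with hN
  have hN_mono : ∀ {X X' : Finset γ}, X ⊆ X' → N X ⊆ N X' := fun hXX' y hy => by
    simp only [hN, mem_filter, mem_univ, true_and] at hy ⊢
    obtain ⟨x, hx, hr⟩ := hy
    exact ⟨x, hXX' hx, hr⟩
  obtain ⟨X, hX, hmin⟩ :=
    exists_min_image {X ∈ X₀.powerset | #(N X) + d ≤ #X} card ⟨X₀, by simpa using hX₀⟩
  simp only [mem_filter, mem_powerset] at hX hmin
  obtain ⟨hXX₀, hXd⟩ := hX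
  have herase : ∀ x ∈ X, #X ≤ #(N (X.erase x)) + d := fun x hx => by
    by_contra! h
    have := hmin _ ⟨(erase_subset x X).trans hXX₀, by rw [card_erase_of_mem hx]; omega⟩
    rw [card_erase_of_mem hx] at this
    have := card_pos.2 ⟨x, hx⟩
    omega
  obtain ⟨x₀, hx₀⟩ : X.Nonempty := card_pos.1 (by omega)
  have hNX : #(N X) + d = #X :=
    le_antisymm hXd ((herase x₀ hx₀).trans (by gcongr; exact hN_mono (erase_subset x₀ X)))
  refine ⟨#X, card_le_card hXX₀, by omega, X, rfl, N X, by omega, ?_, ?_⟩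
  · intro x hx y hy hr
    exact hy (by simpa [hN] using ⟨x, hx, hr⟩)
  · intro y hy
    obtain ⟨x₁, hx₁, hr₁⟩ : ∃ x ∈ X, r x y := by simpa [hN] using hy
    by_contra! honly
    have hsub : N (X.erase x₁) ⊆ (N X).erase y := fun y' hy' => by
      obtain ⟨x, hx, hr⟩ : ∃ x ∈ X.erase x₁, r x y' := by simpa [hN] using hy'
      refine mem_erase.2 ⟨fun hyy' => ?_, hN_mono (erase_subset x₁ X) hy'⟩
      subst hyy'
      exact honly x₁ hx₁ x (mem_of_mem_erase hx) (ne_of_mem_erase hx).symm hr₁ hr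
    have := card_le_card hsub
    rw [card_erase_of_mem hy] at this
    have := herase x₁ hx₁
    have := card_pos.2 ⟨y, hy⟩
    omega

theorem exists_hasHallObstruction_of_not_exists_injective [Fintype γ] [Fintype δ]
    (r : γ → δ → Prop) (hcard : Fintype.card γ ≤ Fintype.card δ)
    (h : ¬ ∃ f : γ → δ, Injective f ∧ ∀ x, r x (f x)) :
    (∃ a ∈ Icc 1 (Fintype.card δ / 2 + 1), HasHallObstruction r a (a - 1)) ∨
      ∃ a ∈ Icc (Fintype.card δ + 1 - Fintype.card γ) (Fintype.card δ / 2 + 1),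
        HasHallObstruction (flip r) a (a - (Fintype.card δ + 1 - Fintype.card γ)) := by
  classical
  obtain ⟨X₀, hX₀⟩ : ∃ X₀ : Finset γ, #{y | ∃ x ∈ X₀, r x y} + 1 ≤ #X₀ := by
    by_contra! hall
    exact h ((Fintype.all_card_le_filter_rel_iff_exists_injective r).1 fun A =>
      Nat.lt_succ_iff.1 (hall A))
  obtain ⟨a, -, ha, X, hX, Y, hY, hXY, hY₂⟩ := exists_hasHallObstruction r le_rfl hX₀
  by_cases haK : a ≤ Fintype.card δ / 2 + 1
  · exact Or.inl ⟨a, mem_Icc.2 ⟨ha, haK⟩, X, hX, Y, hY, hXY, hY₂⟩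
  right
  -- Since `X` has no neighbours outside `Y`, the vertices outside `Y` violate Hall's condition for
  -- matchings of `δ` into `γ`, shifted by the surplus `card δ - card γ`.
  have hsub : ({x | ∃ y ∈ Yᶜ, flip r y x} : Finset γ) ⊆ Xᶜ := fun x hx => by
    obtain ⟨y, hy, hr⟩ : ∃ y ∉ Y, r x y := by simpa [flip] using hx
    exact mem_compl.2 fun hxX => hXY x hxX y hy hr
  have hN := card_le_card hsub
  have hXγ : a ≤ Fintype.card γ := hX ▸ card_le_univ X
  have hYδ := card_le_univ Y
  rw [card_compl] at hN
  obtain ⟨a', ha'Y, hda', hobs⟩ := exists_hasHallObstruction (flip r)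
    (d := Fintype.card δ + 1 - Fintype.card γ) (by omega) (X₀ := Yᶜ) (by rw [card_compl]; omega)
  rw [card_compl] at ha'Y
  exact ⟨a', mem_Icc.2 ⟨hda', by omega⟩, hobs⟩

end HallObstruction

theorem hasRightSaturatedTwoMatching_of_injective {nL nR : ℕ} {G : Fin nL × Fin nR → Bool}
    {H : Finset (Fin nR)} {f₁ : H → Fin nL} (hf₁ : Injective f₁) (hG₁ : ∀ r, G (f₁ r, r) = true)
    {f₂ : ↥Hᶜ → Fin nL} (hf₂ : Injective f₂) (hG₂ : ∀ r, G (f₂ r, r) = true) :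
    HasRightSaturatedTwoMatching G := by
  classical
  set g : Fin nR → Fin nL := fun r => if hr : r ∈ H then f₁ ⟨r, hr⟩ else f₂ ⟨r, mem_compl.2 hr⟩
  have hfiber : ∀ (K : Finset (Fin nR)) (f : K → Fin nL), Injective f → (∀ r : K, g r = f r) →
      ∀ ℓ, #{r ∈ K | g r = ℓ} ≤ 1 := fun K f hf hgf ℓ => card_le_one.2 fun r hr r' hr' => by
    simp only [mem_filter] at hr hr'
    have := hf ((hgf ⟨r, hr.1⟩).symm.trans (hr.2.trans (hr'.2.symm.trans (hgf ⟨r', hr'.1⟩))))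
    exact congrArg Subtype.val this
  refine ⟨g, fun r => ?_, fun ℓ => ?_⟩
  · by_cases hr : r ∈ H
    · simpa [g, hr] using hG₁ ⟨r, hr⟩
    · simpa [g, hr] using hG₂ ⟨r, mem_compl.2 hr⟩
  · calc #{r | g r = ℓ} ≤ #({r ∈ H | g r = ℓ} ∪ {r ∈ Hᶜ | g r = ℓ}) :=
          card_le_card fun r hr => by by_cases h : r ∈ H <;> simp_all
      _ ≤ 1 + 1 := (card_union_le _ _).trans <| add_le_add
          (hfiber H f₁ hf₁ (fun r => dif_pos r.2) ℓ)
          (hfiber Hᶜ f₂ hf₂ (fun r => dif_neg (mem_compl.1 r.2)) ℓ)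

section BernoulliProduct

variable {ι γ δ : Type*}

def cylinderEvent (A B : Finset ι) : Set (ι → Bool) :=
  {G | (∀ i ∈ A, G i = false) ∧ ∀ i ∈ B, G i = true}

theorem measureReal_pi_cylinderEvent [Fintype ι] (ν : Measure Bool) [IsProbabilityMeasure ν]
    {A B : Finset ι} (hAB : Disjoint A B) :
    (Measure.pi fun _ : ι => ν).real (cylinderEvent A B) =
      ν.real {false} ^ #A * ν.real {true} ^ #B := by
  classical
  have hpi : cylinderEvent A B =
      Set.univ.pi fun i => {b | (i ∈ A → b = false) ∧ (i ∈ B → b = true)} := by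
    ext G
    simp only [cylinderEvent, Set.mem_ofPred_eq, Set.mem_pi, Set.mem_univ, true_implies]
    exact ⟨fun h i => ⟨h.1 i, h.2 i⟩, fun h => ⟨fun i => (h i).1, fun i => (h i).2⟩⟩
  have hfactor : ∀ i, ν.real {b | (i ∈ A → b = false) ∧ (i ∈ B → b = true)} =
      (if i ∈ A then ν.real {false} else 1) * (if i ∈ B then ν.real {true} else 1) := fun i => by
    by_cases hA : i ∈ A
    · simp [hA, disjoint_left.1 hAB hA]
    by_cases hB : i ∈ B <;> simp [hA, hB, -Bool.univ_eq]
  rw [hpi, measureReal_def, Measure.pi_pi, ENNReal.toReal_prod]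
  simp only [← measureReal_def, hfactor, prod_mul_distrib, prod_ite_mem, univ_inter, prod_const]

def pairEdges [DecidableEq ι] (e : γ × δ ↪ ι) (Y : Finset δ) (φ : ∀ y ∈ Y, γ × γ) : Finset ι :=
  Y.attach.biUnion fun y => {e ((φ y.1 y.2).1, y.1), e ((φ y.1 y.2).2, y.1)}

theorem card_pairEdges [DecidableEq ι] (e : γ × δ ↪ ι) {Y : Finset δ} {φ : ∀ y ∈ Y, γ × γ}
    (hφ : ∀ y hy, (φ y hy).1 ≠ (φ y hy).2) : #(pairEdges e Y φ) = 2 * #Y := by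
  rw [pairEdges, card_biUnion]
  · rw [sum_congr rfl fun y _ => card_pair (e.injective.ne fun h => hφ y.1 y.2
      (congrArg Prod.fst h)), sum_const, card_attach, smul_eq_mul, mul_comm]
  · rintro ⟨y, hy⟩ - ⟨y', hy'⟩ - hyy'
    have hne : ∀ x x', e (x, y') ≠ e (x', y) := fun x x' h =>
      hyy' (Subtype.ext (congrArg Prod.snd (e.injective h)).symm)
    simp only [Function.onFun, disjoint_insert_left, disjoint_insert_right, disjoint_singleton,
      mem_insert, mem_singleton]
    exact ⟨not_or.2 ⟨hne _ _, hne _ _⟩, fun h => hne _ _ h.symm, fun h => hne _ _ h.symm⟩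

theorem disjoint_map_product_compl_pairEdges [DecidableEq ι] [Fintype δ] [DecidableEq δ]
    (e : γ × δ ↪ ι) (X : Finset γ) (Y : Finset δ) (φ : ∀ y ∈ Y, γ × γ) :
    Disjoint ((X ×ˢ Yᶜ).map e) (pairEdges e Y φ) := by
  simp only [pairEdges, disjoint_left, Finset.mem_map, mem_product, mem_compl, mem_biUnion,
    mem_insert, mem_singleton]
  rintro _ ⟨⟨x, y⟩, ⟨-, hy⟩, rfl⟩ ⟨⟨y', hy'⟩, -, h | h⟩ <;>
    exact hy (congrArg Prod.snd (e.injective h) ▸ hy')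

-- `φ` picks, for each `y ∈ Y`, two distinct neighbours of `y` in `X`.
theorem setOf_hasHallObstruction_subset [DecidableEq ι] [Fintype γ] [Fintype δ] [DecidableEq δ]
    (e : γ × δ ↪ ι) (a b : ℕ) :
    {G | HasHallObstruction (fun x y => G (e (x, y)) = true) a b} ⊆
      ⋃ X ∈ powersetCard a univ, ⋃ Y ∈ powersetCard b univ, ⋃ φ ∈ Y.pi fun _ => X.offDiag,
        cylinderEvent ((X ×ˢ Yᶜ).map e) (pairEdges e Y φ) := by
  rintro G ⟨X, hX, Y, hY, hXY, hY₂⟩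
  have : ∀ y ∈ Y, ∃ q ∈ X.offDiag, G (e (q.1, y)) = true ∧ G (e (q.2, y)) = true := fun y hy => by
    obtain ⟨x₁, hx₁, x₂, hx₂, hne, h₁, h₂⟩ := hY₂ y hy
    exact ⟨(x₁, x₂), mem_offDiag.2 ⟨hx₁, hx₂, hne⟩, h₁, h₂⟩
  choose φ hφ h₁ h₂ using this
  simp only [Set.mem_iUnion, mem_powersetCard, subset_univ, true_and, exists_prop]
  refine ⟨X, hX, Y, hY, φ, mem_pi.2 hφ, ?_, ?_⟩
  · simp only [Finset.mem_map, mem_product, mem_compl]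
    rintro _ ⟨⟨x, y⟩, ⟨hx, hy⟩, rfl⟩
    simpa using hXY x hx y hy
  · simp only [pairEdges, mem_biUnion, mem_insert, mem_singleton]
    rintro _ ⟨⟨y, hy⟩, -, rfl | rfl⟩
    exacts [h₁ y hy, h₂ y hy]

theorem measureReal_pi_hasHallObstruction_le [Fintype ι] [Fintype γ] [Fintype δ] (ν : Measure Bool)
    [IsProbabilityMeasure ν] (e : γ × δ ↪ ι) (a b : ℕ) :
    (Measure.pi fun _ : ι => ν).real
        {G | HasHallObstruction (fun x y => G (e (x, y)) = true) a b} ≤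
      (Fintype.card γ).choose a * (Fintype.card δ).choose b * (a * ν.real {true}) ^ (2 * b) *
        ν.real {false} ^ (a * (Fintype.card δ - b)) := by
  classical
  set μ := Measure.pi fun _ : ι => ν
  set p := ν.real {true}
  set q := ν.real {false}
  have hwitness : ∀ X ∈ powersetCard a univ, ∀ Y ∈ powersetCard b univ,
      ∑ φ ∈ Y.pi (fun _ => X.offDiag),
          μ.real (cylinderEvent ((X ×ˢ Yᶜ).map e) (pairEdges e Y φ)) ≤
        (a ^ 2) ^ b * (q ^ (a * (Fintype.card δ - b)) * p ^ (2 * b)) := fun X hX Y hY => by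
    rw [mem_powersetCard] at hX hY
    have hφ : ∀ φ ∈ Y.pi (fun _ => X.offDiag), ∀ y hy, (φ y hy).1 ≠ (φ y hy).2 :=
      fun φ hφ y hy => (mem_offDiag.1 (mem_pi.1 hφ y hy)).2.2
    rw [sum_congr rfl fun φ hφ' => by
      rw [measureReal_pi_cylinderEvent ν (disjoint_map_product_compl_pairEdges e X Y φ),
        card_pairEdges e (hφ φ hφ'), card_map, card_product, card_compl, hX.2, hY.2],
      sum_const, nsmul_eq_mul, card_pi, prod_const, offDiag_card, hX.2, hY.2]
    gcongr
    exact_mod_cast Nat.pow_le_pow_left ((Nat.sub_le _ _).trans (sq a).ge) b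
  calc μ.real {G | HasHallObstruction (fun x y => G (e (x, y)) = true) a b}
      ≤ ∑ X ∈ powersetCard a univ, ∑ Y ∈ powersetCard b univ, ∑ φ ∈ Y.pi fun _ => X.offDiag,
          μ.real (cylinderEvent ((X ×ˢ Yᶜ).map e) (pairEdges e Y φ)) :=
        (measureReal_mono (setOf_hasHallObstruction_subset e a b) (measure_ne_top _ _)).trans <|
          (measureReal_biUnion_finset_le _ _).trans <|
            sum_le_sum fun X _ => (measureReal_biUnion_finset_le _ _).trans <|
              sum_le_sum fun Y _ => measureReal_biUnion_finset_le _ _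
    _ ≤ ∑ X ∈ powersetCard a univ, ∑ Y ∈ powersetCard b univ,
          (a ^ 2) ^ b * (q ^ (a * (Fintype.card δ - b)) * p ^ (2 * b)) :=
        sum_le_sum fun X hX => sum_le_sum fun Y hY => hwitness X hX Y hY
    _ = _ := by
      simp only [sum_const, card_powersetCard, card_univ, nsmul_eq_mul]
      ring

end BernoulliProduct

section Estimates

open Nat in
theorem choose_le_exp_mul_div_pow (N a : ℕ) : (N.choose a : ℝ) ≤ (exp 1 * N / a) ^ a := by
  rcases Nat.eq_zero_or_pos a with rfl | ha
  · simp
  have ha' : (0 : ℝ) < a := by exact_mod_cast ha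
  calc (N.choose a : ℝ) ≤ N ^ a / a ! := Nat.choose_le_pow_div a N
    _ = (N / a) ^ a * (a ^ a / a !) := by rw [div_pow]; field_simp
    _ ≤ (N / a) ^ a * exp a := by gcongr; exact pow_div_factorial_le_exp _ ha'.le a
    _ = (exp 1 * N / a) ^ a := by rw [← exp_one_pow]; ring

open Nat in
theorem choose_mul_pow_le_exp_mul_max_pow (N : ℕ) {a b : ℕ} (hb : b ≤ a) {x : ℝ} (hx : 0 ≤ x) :
    N.choose b * x ^ b ≤ (exp 1 * max 1 (N * x / a)) ^ a := by
  rcases Nat.eq_zero_or_pos a with rfl | ha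
  · obtain rfl : b = 0 := Nat.le_zero.1 hb
    simp
  have ha' : (0 : ℝ) < a := by exact_mod_cast ha
  calc N.choose b * x ^ b ≤ N ^ b / b ! * x ^ b := by gcongr; exact Nat.choose_le_pow_div b N
    _ = a ^ b / b ! * (N * x / a) ^ b := by rw [div_pow, mul_pow]; field_simp
    _ ≤ exp a * max 1 (N * x / a) ^ a := by
      gcongr
      · exact pow_div_factorial_le_exp _ ha'.le b
      · calc (N * x / a) ^ b ≤ max 1 (N * x / a) ^ b :=
            pow_le_pow_left₀ (by positivity) (le_max_right _ _) b
          _ ≤ max 1 (N * x / a) ^ a := pow_le_pow_right₀ (le_max_left _ _) hb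
    _ = (exp 1 * max 1 (N * x / a)) ^ a := by rw [mul_pow, exp_one_pow]

theorem choose_mul_choose_mul_pow_le_s16 {n₁ n₂ a b m : ℕ} (hb : b ≤ a) {p q : ℝ} (hq : 0 ≤ q) :
    n₁.choose a * n₂.choose b * (a * p) ^ (2 * b) * q ^ (a * m) ≤
      (exp 1 * n₁ / a * (exp 1 * max 1 (n₂ * a * p ^ 2)) * q ^ m) ^ a := by
  have hx : (n₂ : ℝ) * (a * p) ^ 2 / a = n₂ * a * p ^ 2 := by
    rcases Nat.eq_zero_or_pos a with rfl | ha
    · simp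
    · field_simp
  calc n₁.choose a * n₂.choose b * (a * p) ^ (2 * b) * q ^ (a * m)
      = n₁.choose a * (n₂.choose b * ((a * p) ^ 2) ^ b) * (q ^ m) ^ a := by
        rw [← pow_mul, ← pow_mul, mul_comm m a]; ring
    _ ≤ (exp 1 * n₁ / a) ^ a * (exp 1 * max 1 (n₂ * a * p ^ 2)) ^ a * (q ^ m) ^ a := by
        gcongr
        · exact choose_le_exp_mul_div_pow n₁ a
        · rw [← hx]; exact choose_mul_pow_le_exp_mul_max_pow n₂ hb (by positivity)
    _ = _ := by ring

/-- With `L = log n + c`, bounds the `a`-th root of the union bound for obstructions with `a`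
vertices: the first term handles `4 a L² ≤ n`, the second the larger obstructions. -/
noncomputable def obstructionRate (n : ℕ) (L : ℝ) : ℝ :=
  exp 3 * n * exp (-L) + 4 * exp 2 * L ^ 2 * exp (-(L / 2))

theorem factor_le_exp_two_mul {n n₁ n₂ a m : ℕ} {L p q : ℝ} (hn : 0 < n) (hn₁ : n₁ ≤ n)
    (hn₂ : n₂ ≤ n) (hp : 0 ≤ p) (hpL : p ≤ 2 * L / n) (hq : 0 ≤ q)
    (hqL : q ≤ exp (-(2 * L / n))) :
    exp 1 * n₁ / a * (exp 1 * max 1 (n₂ * a * p ^ 2)) * q ^ m ≤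
      exp 2 * (n / a) * max 1 (4 * a * L ^ 2 / n) * exp (-(2 * L / n * m)) := by
  have hmax : max 1 (n₂ * a * p ^ 2) ≤ max 1 (4 * a * L ^ 2 / n) := by
    gcongr
    calc (n₂ : ℝ) * a * p ^ 2 ≤ n * a * (2 * L / n) ^ 2 := by gcongr
      _ = 4 * a * L ^ 2 / n := by field_simp; ring
  have hqm : q ^ m ≤ exp (-(2 * L / n * m)) := by
    calc q ^ m ≤ exp (-(2 * L / n)) ^ m := by gcongr
      _ = _ := by rw [← exp_nat_mul]; ring_nf
  calc _ ≤ exp 1 * n / a * (exp 1 * max 1 (4 * a * L ^ 2 / n)) * exp (-(2 * L / n * m)) := by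
        gcongr
    _ = _ := by rw [show (2 : ℝ) = 1 + 1 by norm_num, exp_add]; ring

theorem factor_le_obstructionRate {n n₁ n₂ a m : ℕ} {L p q : ℝ} (hn : 0 < n) (hL : 1 ≤ L)
    (hn₁ : n₁ ≤ n) (hn₂ : n₂ ≤ n) (ha : 0 < a) (hm : n ≤ 2 * (m + a)) (hm' : n ≤ 4 * m)
    (hp : 0 ≤ p) (hpL : p ≤ 2 * L / n) (hq : 0 ≤ q) (hqL : q ≤ exp (-(2 * L / n))) :
    exp 1 * n₁ / a * (exp 1 * max 1 (n₂ * a * p ^ 2)) * q ^ m ≤ obstructionRate n L := by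
  have hn' : (0 : ℝ) < n := by exact_mod_cast hn
  have ha' : (1 : ℝ) ≤ a := by exact_mod_cast ha
  have hmR : (n : ℝ) ≤ 2 * (m + a) := by exact_mod_cast hm
  have hmR' : (n : ℝ) ≤ 4 * m := by exact_mod_cast hm'
  refine (factor_le_exp_two_mul (m := m) hn hn₁ hn₂ hp hpL hq hqL).trans ?_
  rcases le_or_gt (4 * a * L ^ 2 / n) 1 with hs | hs
  · have h2La : 2 * L * a ≤ n := by
      have : 4 * a * L ^ 2 ≤ n := by rwa [div_le_one hn'] at hs
      nlinarith
    have hexp : L - 1 ≤ 2 * L / n * m := by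
      rw [div_mul_eq_mul_div, le_div_iff₀ hn']
      nlinarith
    calc _ ≤ exp 2 * (n / 1) * 1 * exp (-(L - 1)) := by
          rw [max_eq_left hs]; gcongr
      _ = exp 3 * n * exp (-L) := by
          rw [div_one, mul_one, mul_right_comm, ← exp_add,
            show 2 + -(L - 1) = 3 + -L by ring, exp_add]; ring
      _ ≤ obstructionRate n L := le_add_of_nonneg_right (by positivity)
  · have hexp : L / 2 ≤ 2 * L / n * m := by
      rw [div_mul_eq_mul_div, div_le_div_iff₀ two_pos hn']
      nlinarith
    calc _ ≤ exp 2 * (n / a) * (4 * a * L ^ 2 / n) * exp (-(L / 2)) := by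
          rw [max_eq_right hs.le]; gcongr
      _ = 4 * exp 2 * L ^ 2 * exp (-(L / 2)) := by field_simp
      _ ≤ obstructionRate n L := le_add_of_nonneg_left (by positivity)

theorem sum_Icc_pow_le_div_one_sub {θ : ℝ} (hθ₀ : 0 ≤ θ) (hθ : θ < 1) {k : ℕ} (hk : 1 ≤ k)
    (K : ℕ) : ∑ a ∈ Icc k K, θ ^ a ≤ θ / (1 - θ) := by
  rw [← Ico_add_one_right_eq_Icc]
  refine (geom_sum_Ico_le_of_lt_one hθ₀ hθ).trans ?_
  gcongr
  exact pow_le_of_le_one hθ₀ hθ.le (by omega)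

end Estimates

section Assembly

variable {ι γ δ : Type*} [Fintype ι] [Fintype γ] [Fintype δ] (ν : Measure Bool)
  [IsProbabilityMeasure ν]

theorem measureReal_pi_hasHallObstruction_le_pow (e : γ × δ ↪ ι) {n a b : ℕ} {L : ℝ}
    (hn : 0 < n) (hL : 1 ≤ L) (hp : ν.real {true} ≤ 2 * L / n)
    (hq : ν.real {false} ≤ exp (-(2 * L / n))) (hγ : Fintype.card γ ≤ n)
    (hδ : Fintype.card δ ≤ n) (ha : 0 < a) (hb : b ≤ a) (hm : n ≤ 2 * (Fintype.card δ - b + a))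
    (hm' : n ≤ 4 * (Fintype.card δ - b)) :
    (Measure.pi fun _ : ι => ν).real
        {G | HasHallObstruction (fun x y => G (e (x, y)) = true) a b} ≤
      obstructionRate n L ^ a := by
  have hq₀ : 0 ≤ ν.real {false} := measureReal_nonneg
  refine (measureReal_pi_hasHallObstruction_le ν e a b).trans <|
    (choose_mul_choose_mul_pow_le_s16 hb hq₀).trans <| pow_le_pow_left₀ (by positivity) ?_ a
  exact factor_le_obstructionRate hn hL hγ hδ ha hm hm' measureReal_nonneg hp hq₀ hq

theorem measureReal_pi_not_exists_injective_le (e : γ × δ ↪ ι) {n : ℕ} {L : ℝ} (hn : 0 < n)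
    (hL : 1 ≤ L) (hp : ν.real {true} ≤ 2 * L / n) (hq : ν.real {false} ≤ exp (-(2 * L / n)))
    (hγδ : Fintype.card γ ≤ Fintype.card δ) (hδ : n ≤ 2 * Fintype.card δ)
    (hδn : Fintype.card δ ≤ n) (hθ : obstructionRate n L < 1) :
    (Measure.pi fun _ : ι => ν).real {G | ¬ ∃ f : γ → δ, Injective f ∧ ∀ x, G (e (x, f x)) = true} ≤
      2 * (obstructionRate n L / (1 - obstructionRate n L)) := by
  set θ := obstructionRate n L
  set K := Fintype.card δ / 2 + 1
  set d := Fintype.card δ + 1 - Fintype.card γ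
  have hθ₀ : 0 ≤ θ := by simp only [θ, obstructionRate]; positivity
  let e' : δ × γ ↪ ι := (Equiv.prodComm δ γ).toEmbedding.trans e
  have hcover : {G : ι → Bool | ¬ ∃ f : γ → δ, Injective f ∧ ∀ x, G (e (x, f x)) = true} ⊆
      (⋃ a ∈ Icc 1 K, {G | HasHallObstruction (fun x y => G (e (x, y)) = true) a (a - 1)}) ∪
        ⋃ a ∈ Icc d K, {G | HasHallObstruction (fun y x => G (e' (y, x)) = true) a (a - d)} :=
    fun G hG => by
      rcases exists_hasHallObstruction_of_not_exists_injective (fun x y => G (e (x, y)) = true)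
        hγδ hG with ⟨a, ha, h⟩ | ⟨a, ha, h⟩
      · exact Or.inl (Set.mem_biUnion ha h)
      · exact Or.inr (Set.mem_biUnion ha h)
  calc _ ≤ ∑ a ∈ Icc 1 K, (Measure.pi fun _ : ι => ν).real
          {G | HasHallObstruction (fun x y => G (e (x, y)) = true) a (a - 1)} +
        ∑ a ∈ Icc d K, (Measure.pi fun _ : ι => ν).real
          {G | HasHallObstruction (fun y x => G (e' (y, x)) = true) a (a - d)} :=
        (measureReal_mono hcover (measure_ne_top _ _)).trans <| (measureReal_union_le _ _).trans <|
          add_le_add (measureReal_biUnion_finset_le _ _) (measureReal_biUnion_finset_le _ _)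
    _ ≤ ∑ a ∈ Icc 1 K, θ ^ a + ∑ a ∈ Icc d K, θ ^ a := by
        gcongr with a ha a ha <;> rw [mem_Icc] at ha
        · exact measureReal_pi_hasHallObstruction_le_pow ν e hn hL hp hq (by omega) hδn
            (by omega) (by omega) (by omega) (by omega)
        · exact measureReal_pi_hasHallObstruction_le_pow ν e' hn hL hp hq hδn (by omega)
            (by omega) (by omega) (by omega) (by omega)
    _ ≤ θ / (1 - θ) + θ / (1 - θ) := add_le_add (sum_Icc_pow_le_div_one_sub hθ₀ hθ le_rfl K)
        (sum_Icc_pow_le_div_one_sub hθ₀ hθ (by omega) K)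
    _ = 2 * (θ / (1 - θ)) := by ring

theorem measureReal_pi_not_hasRightSaturatedTwoMatching_le {nL nR n : ℕ} {L : ℝ} (hn : 0 < n)
    (hL : 1 ≤ L) (hp : ν.real {true} ≤ 2 * L / n) (hq : ν.real {false} ≤ exp (-(2 * L / n)))
    (hnL : n ≤ 2 * nL) (hnLn : nL ≤ n) (hnR : nR ≤ n) (hθ : obstructionRate n L < 1) :
    (Measure.pi fun _ : Fin nL × Fin nR => ν).real {G | ¬ HasRightSaturatedTwoMatching G} ≤
      4 * (obstructionRate n L / (1 - obstructionRate n L)) := by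
  classical
  obtain ⟨H, -, hH⟩ := exists_subset_card_eq (s := (univ : Finset (Fin nR))) (n := nR / 2)
    (by simp only [card_univ, Fintype.card_fin]; omega)
  have hhalf : ∀ K : Finset (Fin nR), #K ≤ nL →
      (Measure.pi fun _ : Fin nL × Fin nR => ν).real
          {G | ¬ ∃ f : K → Fin nL, Injective f ∧ ∀ r, G (f r, r) = true} ≤
        2 * (obstructionRate n L / (1 - obstructionRate n L)) := fun K hK =>
    measureReal_pi_not_exists_injective_le ν ((Equiv.prodComm K (Fin nL)).toEmbedding.trans
      ((Embedding.refl _).prodMap (Embedding.subtype _))) hn hL hp hq (by simpa using hK)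
      (by simpa using hnL) (by simpa using hnLn) hθ
  have hcover : {G : Fin nL × Fin nR → Bool | ¬ HasRightSaturatedTwoMatching G} ⊆
      {G | ¬ ∃ f : H → Fin nL, Injective f ∧ ∀ r, G (f r, r) = true} ∪
        {G | ¬ ∃ f : ↥Hᶜ → Fin nL, Injective f ∧ ∀ r, G (f r, r) = true} := fun G hG => by
    by_contra h
    simp only [Set.mem_union, Set.mem_ofPred_eq, not_or, not_not] at h
    obtain ⟨⟨f₁, hf₁, hG₁⟩, ⟨f₂, hf₂, hG₂⟩⟩ := h
    exact hG (hasRightSaturatedTwoMatching_of_injective hf₁ hG₁ hf₂ hG₂)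
  calc _ ≤ _ := (measureReal_mono hcover (measure_ne_top _ _)).trans (measureReal_union_le _ _)
    _ ≤ _ := add_le_add (hhalf H (by omega))
        (hhalf Hᶜ (by rw [card_compl, Fintype.card_fin]; omega))
    _ = _ := by ring

end Assembly

instance (nL nR : ℕ) (p : ENNReal) (hp : p ≤ 1) :
    IsProbabilityMeasure (bipartiteER nL nR p hp) := by
  unfold bipartiteER; infer_instance

set_option linter.deprecated false in
theorem PMF.bernoulli_toMeasure_real_true (p : NNReal) (hp : p ≤ 1) :
    (PMF.bernoulli p hp).toMeasure.real {true} = p := by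
  rw [measureReal_def, PMF.toMeasure_apply_singleton _ _ (measurableSet_singleton _),
    PMF.bernoulli_apply]
  rfl

set_option linter.deprecated false in
theorem PMF.bernoulli_toMeasure_real_false (p : NNReal) (hp : p ≤ 1) :
    (PMF.bernoulli p hp).toMeasure.real {false} = 1 - p := by
  rw [measureReal_def, PMF.toMeasure_apply_singleton _ _ (measurableSet_singleton _),
    PMF.bernoulli_apply]
  simp [hp]

theorem one_sub_min_one_le_exp_neg (x : ℝ) : 1 - min x 1 ≤ exp (-x) := by
  rcases le_total x 1 with h | h
  · rw [min_eq_left h]; linarith [add_one_le_exp (-x)]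
  · rw [min_eq_right h, sub_self]; positivity

theorem measureReal_bipartiteER_not_hasRightSaturatedTwoMatching_le {n nL nR : ℕ} {c : ℝ}
    (hn : 0 < n) (hL : 1 ≤ log n + c) (hL_lb : (n : ℝ) / 2 ≤ nL) (hL_ub : nL ≤ n) (hR : nR ≤ n)
    (hθ : obstructionRate n (log n + c) < 1) :
    (bipartiteER nL nR (ENNReal.ofReal (2 * (log n + c) / n) ⊓ 1) inf_le_right).real
        {G | ¬ HasRightSaturatedTwoMatching G} ≤
      4 * (obstructionRate n (log n + c) / (1 - obstructionRate n (log n + c))) := by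
  have hx : 0 ≤ 2 * (log n + c) / n := by positivity
  have hp : ((ENNReal.ofReal (2 * (log n + c) / n) ⊓ 1).toNNReal : ℝ) =
      min (2 * (log n + c) / n) 1 := by
    rw [← ENNReal.ofReal_one, ← ENNReal.ofReal_min, ENNReal.coe_toNNReal_eq_toReal,
      ENNReal.toReal_ofReal (le_min hx zero_le_one)]
  refine measureReal_pi_not_hasRightSaturatedTwoMatching_le _ hn hL ?_ ?_ ?_ hL_ub hR hθ
  · refine (PMF.bernoulli_toMeasure_real_true _ _).trans_le ?_
    rw [hp]; exact min_le_left _ _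
  · refine (PMF.bernoulli_toMeasure_real_false _ _).trans_le ?_
    rw [hp]
    exact one_sub_min_one_le_exp_neg _
  · exact_mod_cast (by linarith : (n : ℝ) ≤ 2 * nL)

theorem tendsto_obstructionRate {c : ℕ → ℝ} (hc : Tendsto c atTop atTop) :
    Tendsto (fun n : ℕ => obstructionRate n (log n + c n)) atTop (nhds 0) := by
  have hL : Tendsto (fun n : ℕ => log n + c n) atTop atTop :=
    (tendsto_log_atTop.comp tendsto_natCast_atTop_atTop).atTop_add_atTop hc
  have h₁ : Tendsto (fun n : ℕ => exp 3 * n * exp (-(log n + c n))) atTop (nhds 0) := by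
    have := (tendsto_exp_neg_atTop_nhds_zero.comp hc).const_mul (exp 3)
    rw [mul_zero] at this
    refine this.congr' ?_
    filter_upwards [eventually_gt_atTop 0] with n hn
    rw [Function.comp_apply, neg_add, exp_add, exp_neg (log n), exp_log (by positivity)]
    field_simp
  have h₂ : Tendsto (fun L : ℝ => 4 * exp 2 * L ^ 2 * exp (-(L / 2))) atTop (nhds 0) := by
    have := ((tendsto_pow_mul_exp_neg_atTop_nhds_zero 2).comp
      (tendsto_id.atTop_div_const two_pos)).const_mul (16 * exp 2)
    rw [mul_zero] at this
    refine this.congr fun L => ?_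
    simp only [Function.comp_apply, id]
    ring
  have := h₁.add (h₂.comp hL)
  rwa [add_zero] at this

theorem tendsto_measure_of_tendsto_measureReal_compl {α : Type*} {l : Filter α} {Ω : α → Type*}
    [∀ n, MeasurableSpace (Ω n)] {μ : ∀ n, Measure (Ω n)} [∀ n, IsProbabilityMeasure (μ n)]
    {s : ∀ n, Set (Ω n)} (hs : ∀ n, MeasurableSet (s n))
    (h : Tendsto (fun n => (μ n).real (s n)ᶜ) l (nhds 0)) :
    Tendsto (fun n => μ n (s n)) l (nhds 1) := by
  have hμ : ∀ n, μ n (s n) = ENNReal.ofReal (1 - (μ n).real (s n)ᶜ) := fun n => by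
    rw [probReal_compl_eq_one_sub (hs n), sub_sub_cancel, ofReal_measureReal]
  simp only [hμ]
  simpa using ENNReal.tendsto_ofReal (tendsto_const_nhds.sub h (a := (1 : ℝ)))

/-- If `n/2 ≤ n_L ≤ n`, `n_R ≤ n`, and `p = 2(log n + c n)/n` (truncated to at most `1`)
with `c n → ∞`, then `G(n_L, n_R, p)` contains a right-saturated 2-matching with high
probability. -/
theorem er_right_saturated_two_matching_whp (c : ℕ → ℝ) (hc : Tendsto c atTop atTop)
    (nL nR : ℕ → ℕ)
    (hL_lb : ∀ n : ℕ, (n : ℝ) / 2 ≤ (nL n : ℝ)) (hL_ub : ∀ n : ℕ, nL n ≤ n)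
    (hR : ∀ n : ℕ, nR n ≤ n) :
    Tendsto
      (fun n =>
        bipartiteER (nL n) (nR n)
          (ENNReal.ofReal (2 * (Real.log n + c n) / n) ⊓ 1) inf_le_right
          {G | HasRightSaturatedTwoMatching G})
      atTop (nhds 1) := by
  have hθ := tendsto_obstructionRate hc
  have hL : Tendsto (fun n : ℕ => log n + c n) atTop atTop :=
    (tendsto_log_atTop.comp tendsto_natCast_atTop_atTop).atTop_add_atTop hc
  refine tendsto_measure_of_tendsto_measureReal_compl (fun n => (Set.toFinite _).measurableSet) ?_
  refine squeeze_zero' (Eventually.of_forall fun n => measureReal_nonneg) ?_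
    (by simpa using (hθ.div ((tendsto_const_nhds (x := (1 : ℝ))).sub hθ) (by simp)).const_mul 4)
  filter_upwards [eventually_gt_atTop 0, hL.eventually_ge_atTop 1,
    hθ.eventually (gt_mem_nhds one_pos)] with n hn hLn hθn
  exact measureReal_bipartiteER_not_hasRightSaturatedTwoMatching_le hn hLn (hL_lb n) (hL_ub n)
    (hR n) hθn
end
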